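/- arXiv:2506.04657 — 7 statements merged into one kernel-verified Lean document; each statement's English description precedes it below -/
import Mathlib

section
/- Let k ≥ 2. A position S = (x_1, ..., x_n) is a P-position in normal play k-Bounded Greedy Nim if and only if one of the following holds: (a) β(S) is even and R(x_1 − x_2) = 0, or (b) β(S) is odd and (x_1, x_2, x_3) is k-good. -/
/-- One move in `k`-bounded greedy Nim on a descending-sorted list of heaps:
remove `t` stones with `1 ≤ t ≤ min x₁ k` from a heap with the largest
number of stones `x₁` (the head), and re-sort the result in descending order. -/
def BFollower (k : ℕ) (S S' : List ℕ) : Prop :=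
  ∃ t : ℕ, 1 ≤ t ∧ t ≤ min S.headI k ∧
    S' = List.orderedInsert (· ≥ ·) (S.headI - t) S.tail

/-- One move in greedy Nim: remove any `t` stones with `1 ≤ t ≤ x₁` from a heap
with the largest number of stones `x₁`, and re-sort in descending order. -/
def GFollower (S S' : List ℕ) : Prop :=
  ∃ t : ℕ, 1 ≤ t ∧ t ≤ S.headI ∧
    S' = List.orderedInsert (· ≥ ·) (S.headI - t) S.tail

theorem BFollower.sum_lt {k : ℕ} {S S' : List ℕ} (h : BFollower k S S') :
    S'.sum < S.sum := by
  obtain ⟨t, ht1, ht2, rfl⟩ := h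
  have htx : t ≤ S.headI := le_trans ht2 (min_le_left _ _)
  match S with
  | [] => simp [List.headI] at htx; omega
  | a :: l =>
      have hperm := List.perm_orderedInsert (· ≥ ·) (a - t) l
      have hsum : (List.orderedInsert (· ≥ ·) (a - t) l).sum = (a - t) + l.sum :=
        hperm.sum_eq
      simp only [List.headI, List.tail] at *
      simp [hsum]
      omega

theorem GFollower.sum_lt {S S' : List ℕ} (h : GFollower S S') :
    S'.sum < S.sum := by
  obtain ⟨t, ht1, ht2, rfl⟩ := h
  match S with
  | [] => simp [List.headI] at ht2; omega
  | a :: l =>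
      have hperm := List.perm_orderedInsert (· ≥ ·) (a - t) l
      have hsum : (List.orderedInsert (· ≥ ·) (a - t) l).sum = (a - t) + l.sum :=
        hperm.sum_eq
      simp only [List.headI, List.tail] at *
      simp [hsum]
      omega

/-- `S` is a P-position of `k`-bounded greedy Nim under the normal play
convention: the all-zero position is a P-position (it has no followers), and a
position is a P-position iff every follower is an N-position. -/
def NormalBP (k : ℕ) (S : List ℕ) : Prop :=
  ∀ S', BFollower k S S' → ¬ NormalBP k S'
termination_by S.sum
decreasing_by exact BFollower.sum_lt (by assumption)

/-- `S` is a P-position of `k`-bounded greedy Nim under the misère play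
convention: the all-zero position is an N-position, and any other position is a
P-position iff every follower is an N-position. -/
def MisereBP (k : ℕ) (S : List ℕ) : Prop :=
  S.sum ≠ 0 ∧ ∀ S', BFollower k S S' → ¬ MisereBP k S'
termination_by S.sum
decreasing_by exact BFollower.sum_lt (by assumption)

/-- Normal-play P-positions of greedy Nim. -/
def NormalGP (S : List ℕ) : Prop :=
  ∀ S', GFollower S S' → ¬ NormalGP S'
termination_by S.sum
decreasing_by exact GFollower.sum_lt (by assumption)

/-- Misère-play P-positions of greedy Nim. -/
def MisereGP (S : List ℕ) : Prop :=
  S.sum ≠ 0 ∧ ∀ S', GFollower S S' → ¬ MisereGP S'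
termination_by S.sum
decreasing_by exact GFollower.sum_lt (by assumption)

/-- `R a` is the remainder of `a` modulo `k + 1`. -/
def R (k a : ℕ) : ℕ := a % (k + 1)

/-- The `j`-th heap (1-based) of the position `S`. -/
def heap (S : List ℕ) (j : ℕ) : ℕ := S.getD (j - 1) 0

/-- `β(S)`: `0` if `x₃ = 0`, and `max { j : x_j = x₃ } - 2` otherwise. -/
noncomputable def beta (S : List ℕ) : ℕ :=
  if heap S 3 = 0 then 0
  else sSup {j : ℕ | 1 ≤ j ∧ j ≤ S.length ∧ heap S j = heap S 3} - 2

/-- `α(S)`: `0` if `x₁ = 0`, and `max { j : x_j = x₁ }` otherwise. -/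
noncomputable def alpha (S : List ℕ) : ℕ :=
  if heap S 1 = 0 then 0
  else sSup {j : ℕ | 1 ≤ j ∧ j ≤ S.length ∧ heap S j = heap S 1}

/-- The pair `(x₁, x₂)` (with `x₁ ≥ x₂`) is `k`-nice. -/
def KNice (k x₁ x₂ : ℕ) : Prop :=
  (R k x₁ = 0 ∧ R k x₂ = 1) ∨
  (R k (x₁ - x₂) = 0 ∧ 2 ≤ R k x₂) ∨
  (R k x₁ = 1 ∧ R k x₂ = 0)

/-- The triple `(x₁, x₂, x₃)` (with `x₁ ≥ x₂ ≥ x₃`) is `k`-good. -/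
def KGood (k x₁ x₂ x₃ : ℕ) : Prop :=
  (R k (x₁ - x₂) = k ∧ R k (x₂ - x₃) = 0) ∨
  (R k (x₁ - x₂) = 0 ∧ 1 ≤ R k (x₂ - x₃) ∧ R k (x₂ - x₃) ≤ k - 1) ∨
  (R k (x₁ - x₂) = 1 ∧ R k (x₂ - x₃) = k)


/-- The condition of the main theorem characterizing misère P-positions of
`k`-bounded greedy Nim. -/
noncomputable def MiserePCond (k : ℕ) (S : List ℕ) : Prop :=
  (heap S 3 ≤ 1 ∧ Even (beta S) ∧ KNice k (heap S 1) (heap S 2)) ∨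
  (heap S 3 ≤ 1 ∧ Odd (beta S) ∧ R k (heap S 1 - heap S 2) = 0) ∨
  (2 ≤ heap S 3 ∧ Even (beta S) ∧ R k (heap S 1 - heap S 2) = 0) ∨
  (2 ≤ heap S 3 ∧ Odd (beta S) ∧ KGood k (heap S 1) (heap S 2) (heap S 3))

/-! Write `d₁ = x₁ - x₂` and `d₂ = x₂ - x₃`. For each parity of `β` the claimed set prescribes
`R d₁` as a function of `R d₂`. A move that leaves the top heap at least `x₃` keeps `β` and
either lowers `d₁` by `1` to `k`, or replaces `(d₁, d₂)` by `(d₁', d₂ - d₁')` with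
`d₁ + d₁' ≤ k`; either way the prescription is violated afterwards. A move taking the top heap
below `x₃` needs `x₁ - x₃ < k`, which for a position of the set means `d₁ = 0` and `d₂ < k`;
the only delicate case is `x₁ = x₂ = x₃ = x₄`, where the move lowers `β` by one.
Conversely, from any other position the top heap can be lowered to correct `R d₁`, unless `d₁`
is already below its target; then `R d₂ ∈ {0, k}`, and the top heap is moved to `x₂ - k`,
`x₂ - 1` or `x₃ - 1` instead. -/

section Residues

variable {k : ℕ}

theorem sub_mod_add_eq_or {d s : ℕ} (hsd : s ≤ d) (hsk : s ≤ k) :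
    (d - s) % (k + 1) + s = d % (k + 1) ∨
      (d - s) % (k + 1) + s = d % (k + 1) + (k + 1) := by
  have hmod : ((d - s) % (k + 1) + s) % (k + 1) = d % (k + 1) := by
    rw [Nat.mod_add_mod, Nat.sub_add_cancel hsd]
  have := Nat.mod_lt (d - s) (by omega : 0 < k + 1)
  rcases Nat.lt_or_ge ((d - s) % (k + 1) + s) (k + 1) with h | h
  · exact Or.inl (by rwa [Nat.mod_eq_of_lt h] at hmod)
  · rw [Nat.mod_eq_sub_mod h, Nat.mod_eq_of_lt (by omega)] at hmod
    omega

theorem exists_mod_eq_of_lt {d c : ℕ} (hcd : c < d) (hck : c ≤ k) (hne : d % (k + 1) ≠ c) :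
    ∃ e < d, d ≤ e + k ∧ e % (k + 1) = c := by
  have hdiv := Nat.div_add_mod (d - c) (k + 1)
  have hlt := Nat.mod_lt (d - c) (by omega : 0 < k + 1)
  have hmod : (c + (k + 1) * ((d - c) / (k + 1))) % (k + 1) = c := by
    rw [Nat.add_mul_mod_self_left, Nat.mod_eq_of_lt (by omega)]
  refine ⟨c + (k + 1) * ((d - c) / (k + 1)), ?_, by omega, hmod⟩
  by_contra hge
  exact hne (by rwa [show c + (k + 1) * ((d - c) / (k + 1)) = d by omega] at hmod)

def goodResidue (k b : ℕ) : ℕ := if b = 0 then k else if b = k then 1 else 0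

theorem goodResidue_le (hk : 1 ≤ k) (b : ℕ) : goodResidue k b ≤ k := by
  unfold goodResidue
  split_ifs <;> omega

theorem kGood_iff (hk : 1 ≤ k) (x y z : ℕ) :
    KGood k x y z ↔ R k (x - y) = goodResidue k (R k (y - z)) := by
  have := Nat.mod_lt (y - z) (by omega : 0 < k + 1)
  unfold KGood goodResidue R
  split_ifs <;> omega

end Residues

theorem List.getD_eq_iff_lt_count {α : Type*} [LinearOrder α] {c d : α} (hd : d ≠ c) :
    ∀ {m : List α}, m.Pairwise (· ≥ ·) → (∀ a ∈ m, a ≤ c) →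
      ∀ j, (m.getD j d = c ↔ j < m.count c)
  | [], _, _, j => by simp [hd]
  | a :: m, hm, hc, j => by
    have ih := List.getD_eq_iff_lt_count hd (List.pairwise_cons.1 hm).2
      (fun b hb => hc b (List.mem_cons_of_mem a hb))
    by_cases hac : a = c
    · subst hac
      cases j with
      | zero => simp
      | succ j => simp only [List.getD_cons_succ, List.count_cons_self, ih]; omega
    · have hm0 : m.count c = 0 := List.count_eq_zero.2 fun hcm =>
        hac (le_antisymm (hc a (by simp)) ((List.pairwise_cons.1 hm).1 c hcm))
      rw [List.count_cons_of_ne hac, hm0]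
      cases j with
      | zero => simpa using hac
      | succ j => simpa [List.getD_cons_succ, hm0] using ih j

theorem List.exists_eq_cons_cons_cons_cons {α : Type*} {S : List α} (h : 4 ≤ S.length) :
    ∃ x y z w r, S = x :: y :: z :: w :: r := by
  rcases S with _ | ⟨x, _ | ⟨y, _ | ⟨z, _ | ⟨w, r⟩⟩⟩⟩
  all_goals simp at h
  exact ⟨x, y, z, w, r, rfl⟩

section Beta

theorem heap_cons_cons_add_three (a b : ℕ) (m : List ℕ) (i : ℕ) :
    heap (a :: b :: m) (i + 3) = m.getD i 0 := rfl

@[simp] theorem heap_cons_cons_cons_three (a b c : ℕ) (l : List ℕ) :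
    heap (a :: b :: c :: l) 3 = c := rfl

theorem beta_cons_cons_cons (a b : ℕ) {c : ℕ} {r : List ℕ} (hc : c ≠ 0)
    (hr : (c :: r).Pairwise (· ≥ ·)) : beta (a :: b :: c :: r) = (c :: r).count c := by
  have hle : ∀ e ∈ c :: r, e ≤ c := by
    simpa using (List.pairwise_cons.1 hr).1
  have hrun := List.getD_eq_iff_lt_count (Ne.symm hc) hr hle
  have hpos : 0 < (c :: r).count c := List.count_pos_iff.2 (by simp)
  have hgreat : IsGreatest {j | 1 ≤ j ∧ j ≤ (a :: b :: c :: r).length ∧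
      heap (a :: b :: c :: r) j = heap (a :: b :: c :: r) 3} ((c :: r).count c + 2) := by
    refine ⟨⟨by omega, ?_, ?_⟩, ?_⟩
    · have := List.count_le_length (a := c) (l := c :: r)
      simp only [List.length_cons] at this ⊢
      omega
    · rw [show (c :: r).count c + 2 = ((c :: r).count c - 1) + 3 by omega,
        heap_cons_cons_add_three, heap_cons_cons_cons_three, hrun]
      omega
    · rintro j ⟨hj1, -, hj⟩
      obtain hj2 | ⟨i, rfl⟩ : j ≤ 2 ∨ ∃ i, j = i + 3 := by
        rcases Nat.lt_or_ge j 3 with h | h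
        · exact Or.inl (by omega)
        · exact Or.inr ⟨j - 3, by omega⟩
      · omega
      · rw [heap_cons_cons_add_three, heap_cons_cons_cons_three, hrun] at hj
        omega
  rw [beta, if_neg (by simpa using hc), hgreat.csSup_eq, Nat.add_sub_cancel]

theorem beta_cons_cons_congr (a b a' b' : ℕ) {m : List ℕ} (hm : m.Pairwise (· ≥ ·)) :
    beta (a :: b :: m) = beta (a' :: b' :: m) := by
  rcases m with _ | ⟨c, r⟩
  · rfl
  · rcases eq_or_ne c 0 with hc | hc
    · simp [beta, hc]
    · rw [beta_cons_cons_cons _ _ hc hm, beta_cons_cons_cons _ _ hc hm]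

theorem beta_of_heap_three_eq_zero {S : List ℕ} (h : heap S 3 = 0) : beta S = 0 :=
  if_pos h

theorem beta_eq_one_of_lt {a b c w : ℕ} {r : List ℕ} (hc : c ≠ 0) (hwc : w < c)
    (hr : (c :: w :: r).Pairwise (· ≥ ·)) : beta (a :: b :: c :: w :: r) = 1 := by
  rw [beta_cons_cons_cons _ _ hc hr, List.count_cons_self, Nat.add_eq_right,
    List.count_eq_zero]
  intro hmem
  have := (List.pairwise_cons.1 (List.pairwise_cons.1 hr).2).1 c
  simp only [List.mem_cons] at hmem
  rcases hmem with h | h <;> [omega; exact absurd (this h) (by omega)]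

theorem beta_orderedInsert_add_one (a b a' b' : ℕ) {z u : ℕ} {r : List ℕ} (huz : u < z)
    (hr : (z :: z :: r).Pairwise (· ≥ ·)) :
    beta (a' :: b' :: (z :: r).orderedInsert (· ≥ ·) u) + 1 = beta (a :: b :: z :: z :: r) := by
  have hins : (z :: r).orderedInsert (· ≥ ·) u = z :: r.orderedInsert (· ≥ ·) u := by
    simp [List.orderedInsert_cons, huz]
  have hsorted : (z :: r.orderedInsert (· ≥ ·) u).Pairwise (· ≥ ·) :=
    hins ▸ (List.pairwise_cons.1 hr).2.orderedInsert _ _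
  rw [hins, beta_cons_cons_cons _ _ (by omega) hsorted, beta_cons_cons_cons _ _ (by omega) hr,
    List.count_cons_self, List.count_cons_self, List.count_cons_self,
    (List.perm_orderedInsert _ u r).count_eq, List.count_cons_of_ne (by omega)]

end Beta

section Moves

variable {k : ℕ}

theorem bFollower_cons_iff {x : ℕ} {l S' : List ℕ} :
    BFollower k (x :: l) S' ↔ ∃ u < x, x ≤ u + k ∧ S' = l.orderedInsert (· ≥ ·) u := by
  constructor
  · rintro ⟨t, ht, htm, rfl⟩
    obtain ⟨htx, htk⟩ := le_min_iff.1 htm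
    change t ≤ x at htx
    exact ⟨x - t, by omega, by omega, rfl⟩
  · rintro ⟨u, hux, hxu, rfl⟩
    refine ⟨x - u, by omega, le_min (show x - u ≤ x by omega) (by omega), ?_⟩
    change _ = l.orderedInsert (· ≥ ·) (x - (x - u))
    rw [Nat.sub_sub_self hux.le]

theorem BFollower.length_eq {S S' : List ℕ} (h : BFollower k S S') : S'.length = S.length := by
  rcases S with _ | ⟨x, l⟩
  · obtain ⟨t, ht, htm, -⟩ := h
    simp [List.headI] at htm
    omega
  · obtain ⟨u, -, -, rfl⟩ := bFollower_cons_iff.1 h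
    simp [List.orderedInsert_length]

theorem BFollower.pairwise {S S' : List ℕ} (h : BFollower k S S')
    (hS : S.Pairwise (· ≥ ·)) : S'.Pairwise (· ≥ ·) := by
  obtain ⟨t, -, -, rfl⟩ := h
  rcases S with _ | ⟨x, l⟩
  · simp
  · exact (List.pairwise_cons.1 hS).2.orderedInsert _ _

theorem bFollower_top {x y u : ℕ} {m : List ℕ} (hyu : y ≤ u) (hux : u < x) (hxu : x ≤ u + k) :
    BFollower k (x :: y :: m) (u :: y :: m) :=
  bFollower_cons_iff.2 ⟨u, hux, hxu, by simp [List.orderedInsert_cons, hyu]⟩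

theorem bFollower_middle {x y z u : ℕ} {m : List ℕ} (hzu : z ≤ u) (huy : u < y) (hux : u < x)
    (hxu : x ≤ u + k) : BFollower k (x :: y :: z :: m) (y :: u :: z :: m) :=
  bFollower_cons_iff.2 ⟨u, hux, hxu, by simp [List.orderedInsert_cons, hzu, huy]⟩

theorem bFollower_deep {x y z u : ℕ} {m : List ℕ} (huz : u < z) (hzy : z ≤ y) (hux : u < x)
    (hxu : x ≤ u + k) :
    BFollower k (x :: y :: z :: m) (y :: z :: m.orderedInsert (· ≥ ·) u) :=
  bFollower_cons_iff.2 ⟨u, hux, hxu, by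
    rw [List.orderedInsert_cons, if_neg (by omega), List.orderedInsert_cons, if_neg (by omega)]⟩

end Moves

theorem normalBP_iff_of_moves {k : ℕ} {I C : List ℕ → Prop}
    (hI : ∀ ⦃S S'⦄, I S → BFollower k S S' → I S')
    (hstable : ∀ ⦃S S'⦄, I S → C S → BFollower k S S' → ¬ C S')
    (habsorb : ∀ ⦃S⦄, I S → ¬ C S → ∃ S', BFollower k S S' ∧ C S') :
    ∀ S, I S → (NormalBP k S ↔ C S) := by
  intro S
  induction hsum : S.sum using Nat.strong_induction_on generalizing S with
  | _ n ih =>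
    intro hS
    have ih' : ∀ S', BFollower k S S' → (NormalBP k S' ↔ C S') := fun S' hf =>
      ih _ (hsum ▸ hf.sum_lt) S' rfl (hI hS hf)
    rw [NormalBP]
    constructor
    · intro hP
      by_contra hC
      obtain ⟨S', hf, hC'⟩ := habsorb hS hC
      exact hP S' hf ((ih' S' hf).2 hC')
    · intro hC S' hf hP'
      exact hstable hS hC hf ((ih' S' hf).1 hP')

noncomputable def NormalPCond (k : ℕ) (S : List ℕ) : Prop :=
  (Even (beta S) ∧ R k (heap S 1 - heap S 2) = 0) ∨
  (Odd (beta S) ∧ KGood k (heap S 1) (heap S 2) (heap S 3))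

section PPositions

variable {k : ℕ}

theorem normalPCond_cons_cons_cons {a b c : ℕ} {m : List ℕ} :
    NormalPCond k (a :: b :: c :: m) ↔
      (Even (beta (a :: b :: c :: m)) ∧ R k (a - b) = 0) ∨
      (Odd (beta (a :: b :: c :: m)) ∧ KGood k a b c) :=
  Iff.rfl

theorem NormalPCond.not_top_move {x y z u : ℕ} {m : List ℕ} (hm : (z :: m).Pairwise (· ≥ ·))
    (hyu : y ≤ u) (hux : u < x) (hxu : x ≤ u + k) (hC : NormalPCond k (x :: y :: z :: m)) :
    ¬ NormalPCond k (u :: y :: z :: m) := by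
  have hsub := sub_mod_add_eq_or (k := k) (d := x - y) (s := x - u) (by omega) (by omega)
  rw [show x - y - (x - u) = u - y by omega] at hsub
  rw [normalPCond_cons_cons_cons, beta_cons_cons_congr u y x y hm]
  rw [normalPCond_cons_cons_cons] at hC
  simp only [KGood, R, Nat.even_iff, Nat.odd_iff] at hC ⊢
  omega

theorem NormalPCond.not_middle_move {x y z u : ℕ} {m : List ℕ} (hm : (z :: m).Pairwise (· ≥ ·))
    (hzu : z ≤ u) (huy : u < y) (hyx : y ≤ x) (hxu : x ≤ u + k)
    (hC : NormalPCond k (x :: y :: z :: m)) : ¬ NormalPCond k (y :: u :: z :: m) := by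
  have hsub := sub_mod_add_eq_or (k := k) (d := y - z) (s := y - u) (by omega) (by omega)
  rw [show y - z - (y - u) = u - z by omega] at hsub
  have hxy : (x - y) % (k + 1) = x - y := Nat.mod_eq_of_lt (by omega)
  have hyu : (y - u) % (k + 1) = y - u := Nat.mod_eq_of_lt (by omega)
  have := Nat.mod_lt (y - z) (by omega : 0 < k + 1)
  have := Nat.mod_lt (u - z) (by omega : 0 < k + 1)
  rw [normalPCond_cons_cons_cons, beta_cons_cons_congr y u x y hm]
  rw [normalPCond_cons_cons_cons] at hC
  simp only [KGood, R, Nat.even_iff, Nat.odd_iff] at hC ⊢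
  omega

theorem NormalPCond.not_deep_move_of_lt {x y z w u : ℕ} {r : List ℕ} (hzy : z < y) (hyx : y ≤ x)
    (hwz : w ≤ z) (huz : u < z) (hxu : x ≤ u + k) (hC : NormalPCond k (x :: y :: z :: w :: r)) :
    ¬ NormalPCond k (y :: z :: (w :: r).orderedInsert (· ≥ ·) u) := by
  obtain ⟨v, m, huv, hvz, hm⟩ :
      ∃ v m, u ≤ v ∧ v ≤ z ∧ (w :: r).orderedInsert (· ≥ ·) u = v :: m := by
    rw [List.orderedInsert_cons]
    split_ifs with h
    · exact ⟨u, _, le_rfl, huz.le, rfl⟩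
    · exact ⟨w, _, by omega, hwz, rfl⟩
  have hxy : (x - y) % (k + 1) = x - y := Nat.mod_eq_of_lt (by omega)
  have hyz : (y - z) % (k + 1) = y - z := Nat.mod_eq_of_lt (by omega)
  have hzv : (z - v) % (k + 1) = z - v := Nat.mod_eq_of_lt (by omega)
  rw [hm, normalPCond_cons_cons_cons]
  rw [normalPCond_cons_cons_cons] at hC
  simp only [KGood, R, Nat.even_iff, Nat.odd_iff] at hC ⊢
  omega

theorem NormalPCond.not_deep_move_of_eq {x z w u : ℕ} {r : List ℕ}
    (hs : (z :: w :: r).Pairwise (· ≥ ·)) (huz : u < z) (hux : u < x)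
    (hxu : x ≤ u + k) (hC : NormalPCond k (x :: z :: z :: w :: r)) :
    ¬ NormalPCond k (z :: z :: (w :: r).orderedInsert (· ≥ ·) u) := by
  have hxz : (x - z) % (k + 1) = x - z := Nat.mod_eq_of_lt (by omega)
  have hev : Even (beta (x :: z :: z :: w :: r)) := by
    rcases normalPCond_cons_cons_cons.1 hC with ⟨hev, -⟩ | ⟨-, hg⟩
    · exact hev
    · simp only [KGood, R, Nat.sub_self, Nat.zero_mod] at hg
      omega
  obtain rfl : w = z := by
    by_contra hne
    have hwz : w ≤ z := List.rel_of_pairwise_cons hs (by simp)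
    rw [beta_eq_one_of_lt (by omega) (by omega) hs] at hev
    exact Nat.not_even_one hev
  have hβ := beta_orderedInsert_add_one x w w w huz hs
  rw [List.orderedInsert_cons, if_neg (by omega)] at hβ ⊢
  rw [normalPCond_cons_cons_cons]
  simp only [KGood, R, Nat.sub_self, Nat.zero_mod, Nat.even_iff, Nat.odd_iff] at hev ⊢
  omega

theorem NormalPCond.not_of_bFollower {x y z w : ℕ} {r S' : List ℕ}
    (hs : (x :: y :: z :: w :: r).Pairwise (· ≥ ·)) (hC : NormalPCond k (x :: y :: z :: w :: r))
    (hf : BFollower k (x :: y :: z :: w :: r) S') : ¬ NormalPCond k S' := by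
  obtain ⟨u, hux, hxu, rfl⟩ := bFollower_cons_iff.1 hf
  have hyx : y ≤ x := List.rel_of_pairwise_cons hs (by simp)
  have hzy : z ≤ y := List.rel_of_pairwise_cons hs.of_cons (by simp)
  have hzm := hs.of_cons.of_cons
  have hwz : w ≤ z := List.rel_of_pairwise_cons hzm (by simp)
  rcases le_or_gt y u with hyu | huy
  · rw [List.orderedInsert_cons, if_pos hyu]
    exact hC.not_top_move hzm hyu hux hxu
  rw [List.orderedInsert_cons, if_neg (by omega)]
  rcases le_or_gt z u with hzu | huz
  · rw [List.orderedInsert_cons, if_pos hzu]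
    exact hC.not_middle_move hzm hzu huy hyx hxu
  rw [List.orderedInsert_cons, if_neg (by omega)]
  rcases hzy.lt_or_eq with hzy | rfl
  · exact hC.not_deep_move_of_lt hzy hyx hwz huz hxu
  · exact hC.not_deep_move_of_eq hzm huz hux hxu

theorem exists_bFollower_top_mod_eq {x y c : ℕ} {m : List ℕ} (hcd : c < x - y) (hck : c ≤ k)
    (hne : R k (x - y) ≠ c) : ∃ u, BFollower k (x :: y :: m) (u :: y :: m) ∧ R k (u - y) = c := by
  obtain ⟨e, hed, hde, hec⟩ := exists_mod_eq_of_lt hcd hck hne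
  exact ⟨y + e, bFollower_top (by omega) (by omega) (by omega), by rwa [R, Nat.add_sub_cancel_left]⟩

theorem exists_bFollower_normalPCond_of_even {x y z : ℕ} {m : List ℕ}
    (hm : (z :: m).Pairwise (· ≥ ·)) (hev : Even (beta (x :: y :: z :: m)))
    (hxy : R k (x - y) ≠ 0) :
    ∃ S', BFollower k (x :: y :: z :: m) S' ∧ NormalPCond k S' := by
  have hpos : 0 < x - y := Nat.pos_of_ne_zero fun h => hxy (by simp [R, h])
  obtain ⟨u, hf, hu⟩ := exists_bFollower_top_mod_eq hpos (Nat.zero_le k) hxy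
  exact ⟨_, hf, Or.inl ⟨by rwa [beta_cons_cons_congr u y x y hm], hu⟩⟩

theorem exists_bFollower_normalPCond_of_odd_of_lt (hk : 1 ≤ k) {x y z : ℕ} {m : List ℕ}
    (hm : (z :: m).Pairwise (· ≥ ·)) (hod : Odd (beta (x :: y :: z :: m))) (hg : ¬ KGood k x y z)
    (hlt : goodResidue k (R k (y - z)) < x - y) :
    ∃ S', BFollower k (x :: y :: z :: m) S' ∧ NormalPCond k S' := by
  rw [kGood_iff hk] at hg
  obtain ⟨u, hf, hu⟩ := exists_bFollower_top_mod_eq hlt (goodResidue_le hk _) hg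
  exact ⟨_, hf, Or.inr ⟨by rwa [beta_cons_cons_congr u y x y hm], (kGood_iff hk _ _ _).2 hu⟩⟩

theorem exists_bFollower_normalPCond_of_mod_eq_self (hk : 1 ≤ k) {y z : ℕ} {m : List ℕ}
    (hm : (z :: m).Pairwise (· ≥ ·)) (hod : Odd (beta (y :: y :: z :: m))) (hyz : R k (y - z) = k) :
    ∃ S', BFollower k (y :: y :: z :: m) S' ∧ NormalPCond k S' := by
  have hle : k ≤ y - z := hyz ▸ Nat.mod_le _ _
  have hsub := sub_mod_add_eq_or (k := k) (d := y - z) (s := k) hle le_rfl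
  rw [show y - z - k = y - k - z by omega] at hsub
  have := Nat.mod_lt (y - k - z) (by omega : 0 < k + 1)
  have hk' : (y - (y - k)) % (k + 1) = k := by
    rw [show y - (y - k) = k by omega]
    exact Nat.mod_eq_of_lt (by omega)
  refine ⟨_, bFollower_middle (u := y - k) (by omega) (by omega) (by omega) (by omega),
    normalPCond_cons_cons_cons.2 (Or.inr ⟨by rwa [beta_cons_cons_congr _ _ y y hm], ?_⟩)⟩
  simp only [KGood, R] at hyz ⊢
  omega

theorem exists_bFollower_normalPCond_of_mod_eq_zero (hk : 2 ≤ k) {x y z w : ℕ} {r : List ℕ}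
    (hs : (x :: y :: z :: w :: r).Pairwise (· ≥ ·)) (hz : z ≠ 0)
    (hod : Odd (beta (x :: y :: z :: w :: r))) (hyz : R k (y - z) = 0) (hxy : x - y < k) :
    ∃ S', BFollower k (x :: y :: z :: w :: r) S' ∧ NormalPCond k S' := by
  have hyx : y ≤ x := List.rel_of_pairwise_cons hs (by simp)
  have hzy : z ≤ y := List.rel_of_pairwise_cons hs.of_cons (by simp)
  have hzm := hs.of_cons.of_cons
  have hwz : w ≤ z := List.rel_of_pairwise_cons hzm (by simp)
  obtain hzy | rfl := hzy.lt_or_eq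
  · have hsub := sub_mod_add_eq_or (k := k) (d := y - z) (s := 1) (by omega) (by omega)
    rw [show y - z - 1 = y - 1 - z by omega] at hsub
    have := Nat.mod_lt (y - 1 - z) (by omega : 0 < k + 1)
    have h1 : (y - (y - 1)) % (k + 1) = 1 := by
      rw [show y - (y - 1) = 1 by omega]
      exact Nat.mod_eq_of_lt (by omega)
    refine ⟨_, bFollower_middle (u := y - 1) (by omega) (by omega) (by omega) (by omega),
      normalPCond_cons_cons_cons.2 (Or.inr ⟨by rwa [beta_cons_cons_congr _ _ x y hzm], ?_⟩)⟩
    simp only [KGood, R] at hyz ⊢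
    omega
  have hf := bFollower_deep (k := k) (x := x) (y := z) (m := w :: r) (u := z - 1) (by omega) le_rfl
    (by omega) (by omega)
  obtain hwz | rfl := hwz.lt_or_eq
  · rw [List.orderedInsert_cons, if_pos (by omega : z - 1 ≥ w)] at hf
    refine ⟨_, hf, ?_⟩
    have h1 : (z - (z - 1)) % (k + 1) = 1 := by
      rw [show z - (z - 1) = 1 by omega]
      exact Nat.mod_eq_of_lt (by omega)
    rw [normalPCond_cons_cons_cons]
    simp only [KGood, R, Nat.sub_self, Nat.zero_mod, h1, and_true, true_and]
    rcases Nat.even_or_odd (beta (z :: z :: (z - 1) :: w :: r)) with h | h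
    · exact Or.inl h
    · exact Or.inr ⟨h, by omega⟩
  · have hβ := beta_orderedInsert_add_one x w w w (u := w - 1) (by omega) hzm
    rw [List.orderedInsert_cons, if_neg (by omega)] at hf hβ
    refine ⟨_, hf, normalPCond_cons_cons_cons.2 (Or.inl ⟨?_, by simp [R]⟩)⟩
    rw [Nat.even_iff]
    rw [Nat.odd_iff] at hod
    omega

theorem NormalPCond.exists_bFollower_of_not (hk : 2 ≤ k) {x y z w : ℕ} {r : List ℕ}
    (hs : (x :: y :: z :: w :: r).Pairwise (· ≥ ·)) (hC : ¬ NormalPCond k (x :: y :: z :: w :: r)) :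
    ∃ S', BFollower k (x :: y :: z :: w :: r) S' ∧ NormalPCond k S' := by
  have hyx : y ≤ x := List.rel_of_pairwise_cons hs (by simp)
  have hzm := hs.of_cons.of_cons
  rw [normalPCond_cons_cons_cons] at hC
  rcases Nat.even_or_odd (beta (x :: y :: z :: w :: r)) with hev | hod
  · exact exists_bFollower_normalPCond_of_even hzm hev fun h => hC (Or.inl ⟨hev, h⟩)
  have hg : ¬ KGood k x y z := fun h => hC (Or.inr ⟨hod, h⟩)
  have hz : z ≠ 0 := by
    rintro rfl
    rw [beta_of_heap_three_eq_zero rfl] at hod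
    exact Nat.not_odd_zero hod
  rcases lt_or_ge (goodResidue k (R k (y - z))) (x - y) with hlt | hge
  · exact exists_bFollower_normalPCond_of_odd_of_lt (by omega) hzm hod hg hlt
  have hgr := goodResidue_le (k := k) (by omega) (R k (y - z))
  have hxy : R k (x - y) = x - y := Nat.mod_eq_of_lt (show x - y < k + 1 by omega)
  rw [kGood_iff (by omega)] at hg
  unfold goodResidue at hge hg
  split_ifs at hge hg with h0 hk'
  · exact exists_bFollower_normalPCond_of_mod_eq_zero hk hs hz hod h0 (by omega)
  · obtain rfl : x = y := by omega
    exact exists_bFollower_normalPCond_of_mod_eq_self (by omega) hzm hod hk'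
  · omega

end PPositions

theorem stmt2 (k : ℕ) (hk : 2 ≤ k) (S : List ℕ) (hn : 4 ≤ S.length) (hsorted : S.Pairwise (· ≥ ·)) :
    NormalBP k S ↔
      (Even (beta S) ∧ R k (heap S 1 - heap S 2) = 0) ∨
      (Odd (beta S) ∧ KGood k (heap S 1) (heap S 2) (heap S 3)) := by
  refine normalBP_iff_of_moves (C := NormalPCond k)
    (I := fun S => 4 ≤ S.length ∧ S.Pairwise (· ≥ ·))
    (fun S S' hS hf => ⟨hf.length_eq ▸ hS.1, hf.pairwise hS.2⟩) ?_ ?_ S ⟨hn, hsorted⟩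
  · rintro S S' ⟨hn, hs⟩ hC hf
    obtain ⟨x, y, z, w, r, rfl⟩ := List.exists_eq_cons_cons_cons_cons hn
    exact hC.not_of_bFollower hs hf
  · rintro S ⟨hn, hs⟩ hC
    obtain ⟨x, y, z, w, r, rfl⟩ := List.exists_eq_cons_cons_cons_cons hn
    exact NormalPCond.exists_bFollower_of_not hk hs hC
end

section
/- A position S = (x_1, ..., x_n) is a P-position in normal play Greedy Nim if and only if α(S) is even. -/
section Sorted

variable {α : Type*} [LinearOrder α]

theorem le_headI_of_mem [Inhabited α] {l : List α} (hl : l.Pairwise (· ≥ ·)) {x : α}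
    (hx : x ∈ l) : x ≤ l.headI := by
  cases l with
  | nil => simp at hx
  | cons a l =>
    rcases List.mem_cons.mp hx with rfl | hx
    · exact le_rfl
    · exact List.rel_of_pairwise_cons hl hx

theorem getElem_eq_iff_lt_count {a : α} {l : List α} (hl : l.Pairwise (· ≥ ·))
    (hle : ∀ x ∈ l, x ≤ a) {i : ℕ} (hi : i < l.length) : l[i] = a ↔ i < l.count a := by
  induction l generalizing i with
  | nil => simp at hi
  | cons b m ih =>
    rcases (hle b List.mem_cons_self).lt_or_eq with hb | rfl
    · have hlt : ∀ x ∈ b :: m, x < a := by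
        rintro x (_ | ⟨_, hx⟩)
        exacts [hb, (List.rel_of_pairwise_cons hl hx).trans_lt hb]
      rw [List.count_eq_zero.mpr fun ha => lt_irrefl a (hlt a ha)]
      simpa using (hlt _ (List.getElem_mem hi)).ne
    · obtain ⟨hbm, hm⟩ := List.pairwise_cons.mp hl
      cases i with
      | zero => simp
      | succ i => simp [ih hm hbm (Nat.lt_of_succ_lt_succ hi)]

theorem orderedInsert_headI [Inhabited α] (l : List α) :
    l.orderedInsert (· ≥ ·) l.headI = l.headI :: l := by
  cases l <;> simp

end Sorted

theorem headI_tail_le_headI {l : List ℕ} (hl : l.Pairwise (· ≥ ·)) : l.tail.headI ≤ l.headI := by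
  rcases l with _ | ⟨a, _ | ⟨b, l⟩⟩
  · exact le_rfl
  · exact Nat.zero_le a
  · exact List.rel_of_pairwise_cons hl List.mem_cons_self

theorem heap_one (S : List ℕ) : heap S 1 = S.headI := by
  cases S <;> rfl

theorem alpha_of_headI_eq_zero {S : List ℕ} (h : S.headI = 0) : alpha S = 0 := by
  rw [alpha, if_pos (by rw [heap_one, h])]

theorem alpha_eq_count {S : List ℕ} (hS : S.Pairwise (· ≥ ·)) (h : S.headI ≠ 0) :
    alpha S = S.count S.headI := by
  have hmem : S.headI ∈ S := by
    cases S with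
    | nil => exact absurd rfl h
    | cons a l => exact List.mem_cons_self
  have hset : {j | 1 ≤ j ∧ j ≤ S.length ∧ heap S j = heap S 1} =
      Set.Icc 1 (S.count S.headI) := by
    ext j
    simp only [Set.mem_ofPred_eq, Set.mem_Icc, heap_one]
    have hcount := S.count_le_length (a := S.headI)
    by_cases hj : 1 ≤ j ∧ j ≤ S.length
    · have hi : j - 1 < S.length := by omega
      rw [heap, List.getD_eq_getElem _ _ hi,
        getElem_eq_iff_lt_count hS (fun x hx => le_headI_of_mem hS hx) hi]
      omega
    · omega
  rw [alpha, if_neg (by rwa [heap_one]), hset, csSup_Icc (List.count_pos_iff.mpr hmem)]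

theorem alpha_headI_cons {T : List ℕ} (hT : T.Pairwise (· ≥ ·)) (h : T.headI ≠ 0) :
    alpha (T.headI :: T) = alpha T + 1 := by
  have hS : (T.headI :: T).Pairwise (· ≥ ·) :=
    List.pairwise_cons.mpr ⟨fun x hx => le_headI_of_mem hT hx, hT⟩
  rw [alpha_eq_count hS h, alpha_eq_count hT h, List.headI_cons, List.count_cons_self]

theorem alpha_cons_of_headI_lt {x : ℕ} {T : List ℕ} (hT : T.Pairwise (· ≥ ·))
    (h : T.headI < x) : alpha (x :: T) = 1 := by
  have hS : (x :: T).Pairwise (· ≥ ·) :=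
    List.pairwise_cons.mpr ⟨fun y hy => (le_headI_of_mem hT hy).trans h.le, hT⟩
  have hx : x ∉ T := fun hx => (le_headI_of_mem hT hx).not_gt h
  rw [alpha_eq_count hS (by simp only [List.headI_cons]; omega), List.headI_cons,
    List.count_cons_self, List.count_eq_zero.mpr hx]

theorem alpha_orderedInsert_of_lt {a : ℕ} {T : List ℕ} (hT : T.Pairwise (· ≥ ·))
    (h : a < T.headI) : alpha (T.orderedInsert (· ≥ ·) a) = alpha T := by
  have hhead : (T.orderedInsert (· ≥ ·) a).headI = T.headI := by
    cases T with
    | nil => simp at h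
    | cons y T =>
      replace h : a < y := h
      rw [List.orderedInsert_cons, if_neg (not_le.mpr h)]
      rfl
  rw [alpha_eq_count (hT.orderedInsert _ _) (by omega), alpha_eq_count hT (by omega), hhead,
    (List.perm_orderedInsert _ _ _).count_eq, List.count_cons_of_ne h.ne]

theorem alpha_orderedInsert_zero {T : List ℕ} (hT : T.Pairwise (· ≥ ·)) :
    alpha (T.orderedInsert (· ≥ ·) 0) = alpha T := by
  rcases Nat.eq_zero_or_pos T.headI with h | h
  · rw [alpha_of_headI_eq_zero h, alpha_of_headI_eq_zero]
    cases T <;> simp_all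
  · exact alpha_orderedInsert_of_lt hT h

theorem even_alpha_iff_forall_move {S : List ℕ} (hS : S.Pairwise (· ≥ ·)) :
    Even (alpha S) ↔ ∀ t, 1 ≤ t → t ≤ S.headI →
      ¬ Even (alpha (S.tail.orderedInsert (· ≥ ·) (S.headI - t))) := by
  rcases Nat.eq_zero_or_pos S.headI with h0 | hx
  · simp only [alpha_of_headI_eq_zero h0, Even.zero, true_iff]
    omega
  rcases S with _ | ⟨x, T⟩
  · exact absurd hx (lt_irrefl 0)
  have hT := hS.of_cons
  have hTx : T.headI ≤ x := headI_tail_le_headI hS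
  simp only [List.headI_cons, List.tail_cons] at hx hTx ⊢
  rcases hTx.eq_or_lt with hxT | hxT
  · subst hxT
    have hmove : ∀ t, 1 ≤ t → alpha (T.orderedInsert (· ≥ ·) (T.headI - t)) = alpha T :=
      fun t ht => alpha_orderedInsert_of_lt hT (by omega)
    rw [alpha_headI_cons hT hx.ne', Nat.even_add_one]
    constructor
    · intro h t ht _
      rwa [hmove t ht]
    · intro h
      simpa only [hmove _ hx] using h _ hx le_rfl
  · rw [alpha_cons_of_headI_lt hT hxT]
    simp only [Nat.not_even_one, false_iff, not_forall, not_not]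
    by_cases hTe : Even (alpha T)
    · exact ⟨x, hx, le_rfl, by rwa [Nat.sub_self, alpha_orderedInsert_zero hT]⟩
    · have hy : T.headI ≠ 0 := fun h => hTe (by rw [alpha_of_headI_eq_zero h]; exact Even.zero)
      refine ⟨x - T.headI, by omega, by omega, ?_⟩
      rwa [Nat.sub_sub_self hxT.le, orderedInsert_headI, alpha_headI_cons hT hy, Nat.even_add_one]

theorem normalGP_iff_even_alpha {S : List ℕ} (hS : S.Pairwise (· ≥ ·)) :
    NormalGP S ↔ Even (alpha S) := by
  rw [NormalGP, even_alpha_iff_forall_move hS]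
  constructor
  · intro hP t ht1 ht2
    exact (normalGP_iff_even_alpha (hS.tail.orderedInsert _ _)).not.mp (hP _ ⟨t, ht1, ht2, rfl⟩)
  · rintro h S' ⟨t, ht1, ht2, rfl⟩
    exact (normalGP_iff_even_alpha (hS.tail.orderedInsert _ _)).not.mpr (h t ht1 ht2)
termination_by S.sum
decreasing_by all_goals exact GFollower.sum_lt ⟨t, ht1, ht2, rfl⟩

theorem stmt4_general (S : List ℕ) (hsorted : S.Pairwise (· ≥ ·)) :
    NormalGP S ↔ Even (alpha S) :=
  normalGP_iff_even_alpha hsorted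

theorem stmt4 (S : List ℕ) (hn : 4 ≤ S.length) (hsorted : S.Pairwise (· ≥ ·)) :
    NormalGP S ↔ Even (alpha S) :=
  stmt4_general S hsorted
end

section
/- A position S = (x_1, ..., x_n) is a P-position in misère Greedy Nim if and only if one of the following holds: (a) x_1 ≤ 1 and α(S) is odd, or (b) x_1 ≥ 2 and α(S) is even. -/
/-!
Greedy Nim only sees the multiset of heaps, and a move replaces one copy of the maximum `a` by
some `v < a`. If `a` occurs at least twice, every move keeps the maximum and lowers its
multiplicity `α` by one, so the outcome is decided by the parity of `α`; when `a = 1` this is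
misère Nim on single stones. If `a ≥ 2` is unique, the mover wins by reducing it to `0` or to
the second largest heap `b` (to `0` or `1` if `b ≤ 1`), whichever leaves `b` with the winning
multiplicity parity.
-/

/-- The claimed P-positions, read on the multiset of heaps: `s.sup` is `x₁` and
`s.count s.sup` is `α`. -/
def IsGreedyMisereP (s : Multiset ℕ) : Prop :=
  (s.sup = 1 ∧ Odd (s.count 1)) ∨ (2 ≤ s.sup ∧ Even (s.count s.sup))

namespace IsGreedyMisereP

variable {a : ℕ} {t : Multiset ℕ}

theorem one_cons_iff (ht : t.sup ≤ 1) :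
    IsGreedyMisereP (1 ::ₘ t) ↔ ¬ IsGreedyMisereP (0 ::ₘ t) := by
  have hsup : t.sup = 1 ∨ t.sup = 0 := by omega
  have hmem : Odd (t.count 1) → t.sup = 1 := fun hodd =>
    le_antisymm ht (Multiset.le_sup (Multiset.count_pos.1 hodd.pos))
  simp only [IsGreedyMisereP, Multiset.sup_cons, Multiset.count_cons_self,
    Multiset.count_cons_of_ne one_ne_zero, Nat.odd_add_one, ← Nat.not_even_iff_odd]
  rcases hsup with h | h <;> simp_all

theorem cons_iff_of_sup_eq (ha : 2 ≤ a) (ht : t.sup = a) {v : ℕ} (hv : v ≤ a) :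
    IsGreedyMisereP (v ::ₘ t) ↔ Even ((v ::ₘ t).count a) := by
  have hsup : (v ::ₘ t).sup = a := by rw [Multiset.sup_cons, ht]; exact max_eq_right hv
  simp only [IsGreedyMisereP, hsup]
  constructor
  · rintro (⟨rfl, -⟩ | ⟨-, h⟩) <;> omega
  · exact fun h => Or.inr ⟨ha, h⟩

theorem exists_cons_of_sup_lt (ha : 2 ≤ a) (ht : t.sup < a) :
    ∃ v < a, IsGreedyMisereP (v ::ₘ t) := by
  by_cases hb : 2 ≤ t.sup
  · have hb0 : t.sup ≠ 0 := by omega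
    rcases Nat.even_or_odd (t.count t.sup) with he | ho
    · refine ⟨0, by omega, (cons_iff_of_sup_eq hb rfl (Nat.zero_le _)).2 ?_⟩
      rwa [Multiset.count_cons_of_ne hb0]
    · refine ⟨t.sup, ht, (cons_iff_of_sup_eq hb rfl le_rfl).2 ?_⟩
      rwa [Multiset.count_cons_self, Nat.even_add_one, Nat.not_even_iff_odd]
  · rcases Nat.even_or_odd (t.count 1) with he | ho
    · refine ⟨1, by omega, Or.inl ⟨?_, ?_⟩⟩
      · rw [Multiset.sup_cons]; omega
      · rwa [Multiset.count_cons_self, Nat.odd_add_one, Nat.not_odd_iff_even]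
    · have hsup : t.sup = 1 :=
        le_antisymm (by omega) (Multiset.le_sup (Multiset.count_pos.1 ho.pos))
      refine ⟨0, by omega, Or.inl ⟨?_, ?_⟩⟩
      · rw [Multiset.sup_cons, hsup]; rfl
      · rwa [Multiset.count_cons_of_ne one_ne_zero]

theorem not_cons_of_sup_lt (ha : 2 ≤ a) (ht : t.sup < a) : ¬ IsGreedyMisereP (a ::ₘ t) := by
  have hsup : (a ::ₘ t).sup = a := by rw [Multiset.sup_cons]; exact max_eq_left ht.le
  have hcount : (a ::ₘ t).count a = 1 := by
    rw [Multiset.count_cons_self,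
      Multiset.count_eq_zero.2 fun h => (Multiset.le_sup h).not_gt ht]
  simp only [IsGreedyMisereP, hsup, hcount]
  rintro (⟨rfl, -⟩ | ⟨-, h⟩)
  · omega
  · exact Nat.not_even_one h

theorem cons_iff (ht : t.sup ≤ a) :
    IsGreedyMisereP (a ::ₘ t) ↔ a ≠ 0 ∧ ∀ v < a, ¬ IsGreedyMisereP (v ::ₘ t) := by
  obtain rfl | rfl | ha := (by omega : a = 0 ∨ a = 1 ∨ 2 ≤ a)
  · have hsup : (0 ::ₘ t).sup = 0 := by rw [Multiset.sup_cons]; omega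
    simp [IsGreedyMisereP, hsup]
  · simp [one_cons_iff ht]
  · simp only [ne_eq, show a ≠ 0 by omega, not_false_eq_true, true_and]
    obtain hsup | hsup := ht.eq_or_lt
    · rw [cons_iff_of_sup_eq ha hsup le_rfl, Multiset.count_cons_self, Nat.even_add_one]
      constructor
      · intro hodd v hv
        rwa [cons_iff_of_sup_eq ha hsup hv.le, Multiset.count_cons_of_ne hv.ne']
      · intro h
        have h0 := h 0 (by omega)
        rwa [cons_iff_of_sup_eq ha hsup (Nat.zero_le a),
          Multiset.count_cons_of_ne (by omega : a ≠ 0)] at h0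
    · obtain ⟨v, hv, hP⟩ := exists_cons_of_sup_lt ha hsup
      exact iff_of_false (not_cons_of_sup_lt ha hsup) fun h => h v hv hP

end IsGreedyMisereP

theorem gFollower_cons_iff {a : ℕ} {l S' : List ℕ} :
    GFollower (a :: l) S' ↔ ∃ v < a, S' = l.orderedInsert (· ≥ ·) v := by
  simp only [GFollower, List.headI, List.tail]
  constructor
  · rintro ⟨t, ht, hta, rfl⟩
    exact ⟨a - t, by omega, rfl⟩
  · rintro ⟨v, hv, rfl⟩
    exact ⟨a - v, by omega, by omega, by rw [Nat.sub_sub_self hv.le]⟩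

theorem misereGP_cons_iff {a : ℕ} {l : List ℕ} (hl : ∀ x ∈ l, x ≤ a) :
    MisereGP (a :: l) ↔ a ≠ 0 ∧ ∀ v < a, ¬ MisereGP (l.orderedInsert (· ≥ ·) v) := by
  have hsum : (a :: l).sum ≠ 0 ↔ a ≠ 0 := by
    refine ⟨fun h ha => h ?_, fun ha => by simp [ha]⟩
    exact List.sum_eq_zero fun x hx => by
      rcases List.mem_cons.1 hx with rfl | hx
      · exact ha
      · exact Nat.le_zero.1 (ha ▸ hl x hx)
  rw [MisereGP, hsum]
  simp only [gFollower_cons_iff, forall_exists_index, and_imp]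
  refine and_congr_right fun _ => ⟨fun h v hv => h _ v hv rfl, ?_⟩
  rintro h _ v hv rfl
  exact h v hv

theorem misereGP_iff_isGreedyMisereP {S : List ℕ} (hS : S.Pairwise (· ≥ ·)) :
    MisereGP S ↔ IsGreedyMisereP S := by
  induction hn : S.sum using Nat.strong_induction_on generalizing S with
  | _ n ih =>
  match S, hS with
  | [], _ => rw [MisereGP]; simp [IsGreedyMisereP]
  | a :: l, hS =>
    have hl : ∀ x ∈ l, x ≤ a := fun x hx => List.rel_of_pairwise_cons hS hx
    have hfollow : ∀ v < a,
        MisereGP (l.orderedInsert (· ≥ ·) v) ↔ IsGreedyMisereP (v ::ₘ l) := by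
      intro v hv
      have hlt := hn ▸ GFollower.sum_lt (gFollower_cons_iff.2 ⟨v, hv, rfl⟩)
      rw [ih _ hlt (hS.of_cons.orderedInsert v l) rfl,
        Multiset.coe_eq_coe.2 (List.perm_orderedInsert _ v l), Multiset.cons_coe]
    rw [misereGP_cons_iff hl, ← Multiset.cons_coe,
      IsGreedyMisereP.cons_iff (Multiset.sup_le.2 hl)]
    exact and_congr_right fun _ => forall₂_congr fun v hv => not_congr (hfollow v hv)

theorem getD_eq_iff_lt_count {a : ℕ} (ha : a ≠ 0) {l : List ℕ} (hs : l.Pairwise (· ≥ ·))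
    (hle : ∀ x ∈ l, x ≤ a) (i : ℕ) : l.getD i 0 = a ↔ i < l.count a := by
  induction l generalizing i with
  | nil => simp [ha.symm]
  | cons b l ih =>
    have hbl : ∀ x ∈ l, x ≤ b := fun x hx => List.rel_of_pairwise_cons hs hx
    have hcount : b ≠ a → l.count a = 0 := fun hba =>
      List.count_eq_zero_of_not_mem fun h =>
        hba (le_antisymm (hle b List.mem_cons_self) (hbl a h))
    have ih' := ih hs.of_cons fun x hx => hle x (List.mem_cons_of_mem b hx)
    rw [List.count_cons]
    cases i with
    | zero => by_cases hba : b = a <;> simp [hba, hcount]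
    | succ i =>
      rw [List.getD_cons_succ, ih']
      by_cases hba : b = a <;> simp [hba, hcount]

theorem alpha_cons_eq_count {a : ℕ} {l : List ℕ} (hs : (a :: l).Pairwise (· ≥ ·))
    (ha : a ≠ 0) :
    alpha (a :: l) = (a :: l).count a := by
  have hle : ∀ x ∈ a :: l, x ≤ a := by
    simpa using fun x hx => List.rel_of_pairwise_cons hs hx
  have hset : {j | 1 ≤ j ∧ j ≤ (a :: l).length ∧ heap (a :: l) j = heap (a :: l) 1} =
      Set.Icc 1 ((a :: l).count a) := by
    ext j
    have := (a :: l).count_le_length (a := a)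
    simp only [heap, Set.mem_ofPred_eq, Set.mem_Icc, List.getD_cons_zero, Nat.sub_self,
      getD_eq_iff_lt_count ha hs hle]
    omega
  rw [alpha, if_neg (show heap (a :: l) 1 ≠ 0 from ha), hset,
    csSup_Icc (List.count_pos_iff.2 List.mem_cons_self)]

theorem stmt5_general (S : List ℕ) (hsorted : S.Pairwise (· ≥ ·)) :
    MisereGP S ↔
      ((heap S 1 ≤ 1 ∧ Odd (alpha S)) ∨ (2 ≤ heap S 1 ∧ Even (alpha S))) := by
  rw [misereGP_iff_isGreedyMisereP hsorted]
  match S, hsorted with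
  | [], _ => simp [IsGreedyMisereP, alpha, heap]
  | a :: l, hS =>
    have hsup : (↑(a :: l) : Multiset ℕ).sup = a := by
      rw [← Multiset.cons_coe, Multiset.sup_cons]
      exact max_eq_left (Multiset.sup_le.2 fun x hx => List.rel_of_pairwise_cons hS hx)
    rw [IsGreedyMisereP, hsup, Multiset.coe_count, Multiset.coe_count,
      show heap (a :: l) 1 = a from rfl]
    obtain rfl | rfl | ha := (by omega : a = 0 ∨ a = 1 ∨ 2 ≤ a)
    · simp [alpha, heap]
    · simp [alpha_cons_eq_count hS one_ne_zero]
    · have ha1 : a ≠ 1 := by omega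
      have ha1' : ¬ a ≤ 1 := by omega
      simp [alpha_cons_eq_count hS (by omega : a ≠ 0), ha, ha1, ha1']

theorem stmt5 (S : List ℕ) (hn : 4 ≤ S.length) (hsorted : S.Pairwise (· ≥ ·)) :
    MisereGP S ↔
      ((heap S 1 ≤ 1 ∧ Odd (alpha S)) ∨ (2 ≤ heap S 1 ∧ Even (alpha S))) :=
  stmt5_general S hsorted
end

section
/- Let k ≥ 2 and let S = (x_1, ..., x_n) be a position with r_1 = R(x_1 − x_2) ≠ 0. Then removing r_1 stones is a legal move (1 ≤ r_1 ≤ min(x_1, k)), it is a stable move (x_1 − x_2 ≥ r_1), and the resulting follower position S' satisfies R(x_1' − x_2') = 0. -/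
/-! Since `r = R(x₁ - x₂)` is nonzero, `x₂ < x₁`, and `r ≤ x₁ - x₂` keeps the reduced heap
`x₁ - r ≥ x₂` at the top of the re-sorted position. Its new lead `x₁ - x₂ - r` is a multiple
of `k + 1`. -/

theorem R_le_self (k d : ℕ) : R k d ≤ d := Nat.mod_le _ _

theorem R_le (k d : ℕ) : R k d ≤ k := Nat.lt_succ_iff.mp (Nat.mod_lt _ k.succ_pos)

theorem R_sub_R_self (k d : ℕ) : R k (d - R k d) = 0 :=
  Nat.sub_mod_eq_zero_of_mod_eq (Nat.mod_mod _ _).symm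

theorem heap_cons_one (x : ℕ) (l : List ℕ) : heap (x :: l) 1 = x := rfl

theorem heap_cons_two (x : ℕ) (l : List ℕ) : heap (x :: l) 2 = l.headI := by
  cases l <;> rfl

theorem orderedInsert_ge_eq_cons {x : ℕ} {l : List ℕ} (h : l.headI ≤ x) :
    l.orderedInsert (· ≥ ·) x = x :: l := by
  cases l <;> simp_all [List.orderedInsert]

theorem stmt9_general (k : ℕ) (S : List ℕ)
    (hr : R k (heap S 1 - heap S 2) ≠ 0) :
    1 ≤ R k (heap S 1 - heap S 2) ∧
    R k (heap S 1 - heap S 2) ≤ min (heap S 1) k ∧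
    R k (heap S 1 - heap S 2) ≤ heap S 1 - heap S 2 ∧
    R k (heap (List.orderedInsert (· ≥ ·)
          (heap S 1 - R k (heap S 1 - heap S 2)) S.tail) 1 -
        heap (List.orderedInsert (· ≥ ·)
          (heap S 1 - R k (heap S 1 - heap S 2)) S.tail) 2) = 0 := by
  obtain ⟨a, l, rfl⟩ : ∃ a l, S = a :: l := by
    cases S with
    | nil => exact absurd rfl hr
    | cons a l => exact ⟨a, l, rfl⟩
  rw [heap_cons_one, heap_cons_two] at *
  have hstable := R_le_self k (a - l.headI)
  have hbound := R_le k (a - l.headI)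
  rw [List.tail_cons, orderedInsert_ge_eq_cons (by omega), heap_cons_one, heap_cons_two,
    tsub_right_comm, R_sub_R_self]
  exact ⟨by omega, by omega, hstable, rfl⟩

theorem stmt9 (k : ℕ) (hk : 2 ≤ k) (S : List ℕ) (hn : 4 ≤ S.length) (hsorted : S.Pairwise (· ≥ ·))
    (hr : R k (heap S 1 - heap S 2) ≠ 0) :
    1 ≤ R k (heap S 1 - heap S 2) ∧
    R k (heap S 1 - heap S 2) ≤ min (heap S 1) k ∧
    R k (heap S 1 - heap S 2) ≤ heap S 1 - heap S 2 ∧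
    R k (heap (List.orderedInsert (· ≥ ·)
          (heap S 1 - R k (heap S 1 - heap S 2)) S.tail) 1 -
        heap (List.orderedInsert (· ≥ ·)
          (heap S 1 - R k (heap S 1 - heap S 2)) S.tail) 2) = 0 :=
  stmt9_general k S hr
end

section
/- Let k ≥ 2 and let S = (x_1, ..., x_n) be a position satisfying the misère P-condition. If removing t stones (1 ≤ t ≤ min(x_1, k)) is a stable move, i.e. x_1 − x_2 ≥ t, then the follower position S' does not satisfy the misère P-condition. -/
/-!
After a stable move the reduced heap is still in front, so only `x₁` changes. Since `x₂`, `x₃`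
and `β` do not depend on `x₁`, the follower `S'` falls under the same clause of the misère
P-condition as `S`. Given `x₂` and `x₃`, each clause determines the residue of `x₁` or of
`x₁ - x₂` modulo `k + 1`, and removing `1 ≤ t ≤ k` stones changes both residues.
-/

theorem R_sub_ne {k t x : ℕ} (ht1 : 1 ≤ t) (htk : t ≤ k) (htx : t ≤ x) :
    R k (x - t) ≠ R k x := by
  intro h
  have hdvd : k + 1 ∣ x - (x - t) := (Nat.modEq_iff_dvd' (Nat.sub_le x t)).mp h
  rw [Nat.sub_sub_self htx] at hdvd
  have := Nat.le_of_dvd (by omega) hdvd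
  omega

theorem R_eq_of_R_sub_eq_zero {k x y : ℕ} (hyx : y ≤ x) (h : R k (x - y) = 0) : R k x = R k y :=
  ((Nat.modEq_iff_dvd' hyx).mpr (Nat.dvd_of_mod_eq_zero h)).symm

theorem R_lt (k x : ℕ) : R k x < k + 1 := Nat.mod_lt x k.succ_pos

theorem KNice.R_eq {k x₁ y₁ x₂ : ℕ} (hx : KNice k x₁ x₂) (hy : KNice k y₁ x₂)
    (hx₂ : x₂ ≤ x₁) (hy₂ : x₂ ≤ y₁) : R k x₁ = R k y₁ := by
  unfold KNice at hx hy
  have := R_eq_of_R_sub_eq_zero (k := k) hx₂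
  have := R_eq_of_R_sub_eq_zero (k := k) hy₂
  generalize R k (x₁ - x₂) = a at *
  generalize R k (y₁ - x₂) = b at *
  omega

theorem KGood.R_sub_eq {k x₁ y₁ x₂ x₃ : ℕ} (hx : KGood k x₁ x₂ x₃) (hy : KGood k y₁ x₂ x₃) :
    R k (x₁ - x₂) = R k (y₁ - x₂) := by
  unfold KGood at hx hy
  have := R_lt k (x₁ - x₂)
  have := R_lt k (y₁ - x₂)
  generalize R k (x₁ - x₂) = a at *
  generalize R k (y₁ - x₂) = b at *
  generalize R k (x₂ - x₃) = c at *
  omega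

theorem heap_cons_congr (x y : ℕ) (l : List ℕ) {j : ℕ} (hj : 2 ≤ j) :
    heap (x :: l) j = heap (y :: l) j := by
  obtain ⟨i, rfl⟩ := Nat.exists_eq_add_of_le hj
  simp [heap, show 2 + i - 1 = i + 1 by omega]

theorem three_le_length_of_heap_three_ne_zero {S : List ℕ} (h : heap S 3 ≠ 0) : 3 ≤ S.length := by
  by_contra! hlen
  exact h (List.getD_eq_default _ _ (by omega))

theorem beta_cons_le (x y : ℕ) (l : List ℕ) : beta (x :: l) ≤ beta (y :: l) := by
  have h3 : heap (x :: l) 3 = heap (y :: l) 3 := heap_cons_congr x y l (j := 3) (by norm_num)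
  unfold beta
  rw [h3]
  split_ifs with h0
  · exact le_rfl
  have hlen : 3 ≤ (y :: l).length := three_le_length_of_heap_three_ne_zero h0
  have hbdd : BddAbove {j | 1 ≤ j ∧ j ≤ (y :: l).length ∧ heap (y :: l) j = heap (y :: l) 3} :=
    ⟨(y :: l).length, fun j hj => hj.2.1⟩
  have h3mem : 3 ∈ {j | 1 ≤ j ∧ j ≤ (y :: l).length ∧ heap (y :: l) j = heap (y :: l) 3} :=
    ⟨by norm_num, hlen, rfl⟩
  refine Nat.sub_le_sub_right (csSup_le ⟨3, ?_⟩ ?_) 2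
  · exact ⟨by norm_num, by simpa using hlen, h3⟩
  rintro j ⟨hj1, hjlen, hjeq⟩
  rcases Nat.lt_or_ge j 2 with hj | hj
  -- the first heap never realizes the maximum, since the index `3` is in the set
  · exact le_trans (by omega) (le_csSup hbdd h3mem)
  · exact le_csSup hbdd ⟨hj1, by simpa using hjlen, (heap_cons_congr x y l hj).symm.trans hjeq⟩

theorem beta_cons (x y : ℕ) (l : List ℕ) : beta (x :: l) = beta (y :: l) :=
  le_antisymm (beta_cons_le x y l) (beta_cons_le y x l)

theorem miserePCond_iff (k : ℕ) (S : List ℕ) :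
    MiserePCond k S ↔
      if heap S 3 ≤ 1 then
        if Even (beta S) then KNice k (heap S 1) (heap S 2) else R k (heap S 1 - heap S 2) = 0
      else
        if Even (beta S) then R k (heap S 1 - heap S 2) = 0
        else KGood k (heap S 1) (heap S 2) (heap S 3) := by
  have h2 : 2 ≤ heap S 3 ↔ ¬ heap S 3 ≤ 1 := by omega
  unfold MiserePCond
  split_ifs with h3 hβ hβ <;> simp [h2, h3, hβ, ← Nat.not_even_iff_odd]

theorem MiserePCond.not_cons_sub {k x t : ℕ} {l : List ℕ} (hP : MiserePCond k (x :: l))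
    (ht1 : 1 ≤ t) (htk : t ≤ k) (hstable : t ≤ x - heap (x :: l) 2) :
    ¬ MiserePCond k ((x - t) :: l) := by
  intro hP'
  rw [miserePCond_iff, heap_cons_one] at hP hP'
  rw [heap_cons_congr (x - t) x l (j := 2) le_rfl,
    heap_cons_congr (x - t) x l (j := 3) (by norm_num), beta_cons (x - t) x, Nat.sub_right_comm] at hP'
  have hx : R k (x - t) ≠ R k x := R_sub_ne ht1 htk (by omega)
  have hxb : R k (x - heap (x :: l) 2 - t) ≠ R k (x - heap (x :: l) 2) := R_sub_ne ht1 htk hstable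
  split_ifs at hP hP'
  · exact hx (hP'.R_eq hP (by omega) (by omega))
  · exact hxb (hP'.trans hP.symm)
  · exact hxb (hP'.trans hP.symm)
  · exact hxb (by rw [← Nat.sub_right_comm]; exact hP'.R_sub_eq hP)

theorem stmt10_general (k : ℕ) (S : List ℕ)
    (hP : MiserePCond k S)
    (t : ℕ) (ht1 : 1 ≤ t) (ht2 : t ≤ min (heap S 1) k)
    (hstable : t ≤ heap S 1 - heap S 2) :
    ¬ MiserePCond k (List.orderedInsert (· ≥ ·) (heap S 1 - t) S.tail) := by
  obtain _ | ⟨x, l⟩ := S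
  · simp [heap] at hstable; omega
  have hfront : l.orderedInsert (· ≥ ·) (x - t) = (x - t) :: l := by
    cases l with
    | nil => rfl
    | cons b l => simp [heap] at hstable ⊢; omega
  rw [heap_cons_one] at ht2 hstable ⊢
  rw [List.tail_cons, hfront]
  exact hP.not_cons_sub ht1 (ht2.trans (min_le_right _ _)) hstable

theorem stmt10 (k : ℕ) (hk : 2 ≤ k) (S : List ℕ) (hn : 4 ≤ S.length) (hsorted : S.Pairwise (· ≥ ·))
    (hP : MiserePCond k S)
    (t : ℕ) (ht1 : 1 ≤ t) (ht2 : t ≤ min (heap S 1) k)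
    (hstable : t ≤ heap S 1 - heap S 2) :
    ¬ MiserePCond k (List.orderedInsert (· ≥ ·) (heap S 1 - t) S.tail) :=
  stmt10_general k S hP t ht1 ht2 hstable
end

section
/- Let k ≥ 2. If a position S = (x_1, ..., x_n) with x_3 ≤ 1 and β(S) odd is a P-position in misère k-Bounded Greedy Nim, then R(x_1 − x_2) = 0. -/
open List Equiv

theorem misereBP_iff_of_kernel {ι : Type*} {k : ℕ} (pos : ι → List ℕ) (C : ι → Prop)
    (sum_ne_zero : ∀ i, C i → (pos i).sum ≠ 0)
    (stable : ∀ i S', C i → BFollower k (pos i) S' → ∃ j, pos j = S' ∧ ¬ C j)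
    (absorbing : ∀ i, (pos i).sum ≠ 0 → ¬ C i → ∃ j, C j ∧ BFollower k (pos i) (pos j))
    (i : ι) : MisereBP k (pos i) ↔ C i := by
  induction hn : (pos i).sum using Nat.strong_induction_on generalizing i with
  | _ n ih =>
  rw [MisereBP]
  constructor
  · rintro ⟨hsum, hfol⟩
    by_contra hC
    obtain ⟨j, hCj, hmove⟩ := absorbing i hsum hC
    exact hfol _ hmove ((ih _ (hn ▸ hmove.sum_lt) j rfl).2 hCj)
  · intro hC
    refine ⟨sum_ne_zero i hC, fun S' hmove hP => ?_⟩
    obtain ⟨j, rfl, hCj⟩ := stable i S' hC hmove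
    exact hCj ((ih _ (hn ▸ hmove.sum_lt) j rfl).1 hP)

theorem R_ne_of_lt_of_le_add {k x y : ℕ} (hyx : y < x) (hxy : x ≤ y + k) : R k x ≠ R k y := by
  intro h
  have hdvd : k + 1 ∣ x - y := (Nat.modEq_iff_dvd' hyx.le).1 h.symm
  have := Nat.le_of_dvd (by omega) hdvd
  omega

theorem exists_R_sub_eq {k a r : ℕ} (hr : r < k + 1) (hra : r ≤ a) (har : R k a ≠ r) :
    ∃ t, 1 ≤ t ∧ t ≤ min a k ∧ R k (a - t) = r := by
  have hdiv := Nat.div_add_mod (a - r) (k + 1)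
  have hlt := Nat.mod_lt (a - r) (by omega : 0 < k + 1)
  have hle := Nat.mod_le (a - r) (k + 1)
  refine ⟨(a - r) % (k + 1), Nat.pos_of_ne_zero fun h0 => har ?_, by omega, ?_⟩
  · have : a = r + (k + 1) * ((a - r) / (k + 1)) := by omega
    rw [R, this, Nat.add_mul_mod_self_left, Nat.mod_eq_of_lt hr]
  · have : a - (a - r) % (k + 1) = r + (k + 1) * ((a - r) / (k + 1)) := by omega
    rw [R, this, Nat.add_mul_mod_self_left, Nat.mod_eq_of_lt hr]

theorem swap_pow_of_even {α : Type*} [DecidableEq α] (a b : α) {n : ℕ} (hn : Even n) :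
    swap a b ^ n = 1 := by
  obtain ⟨j, rfl⟩ := hn
  rw [← two_mul, pow_mul, sq, swap_mul_self, one_pow]

theorem swap_pow_involutive {α : Type*} [DecidableEq α] (a b : α) (n : ℕ) :
    Function.Involutive ⇑(swap a b ^ n) := fun x => by
  rw [← Perm.mul_apply, ← pow_add, swap_pow_of_even a b ⟨n, rfl⟩, Perm.one_apply]

theorem swap_pow_apply_le (n x : ℕ) : (swap 0 1 ^ n) x ≤ max x 1 := by
  have hx : (swap 0 1 ^ n) x = x ∨ (swap 0 1 ^ n) x = swap 0 1 x := by
    induction n with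
    | zero => exact Or.inl rfl
    | succ n ih =>
      rw [pow_succ', Perm.mul_apply]
      rcases ih with h | h <;> rw [h]
      · exact Or.inr rfl
      · exact Or.inl (swap_apply_self _ _ _)
  rcases hx with h | h <;> rw [h]
  · exact le_max_left _ _
  · rw [swap_apply_def]
    split_ifs <;> omega

theorem orderedInsert_ones_zeros_of_pos {v : ℕ} (hv : 1 ≤ v) (m z : ℕ) :
    (replicate m 1 ++ replicate z 0).orderedInsert (· ≥ ·) v =
      v :: (replicate m 1 ++ replicate z 0) := by
  cases m <;> cases z <;> simp [replicate_succ, hv]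

theorem orderedInsert_zero_ones_zeros (m z : ℕ) :
    (replicate m 1 ++ replicate z 0).orderedInsert (· ≥ ·) 0 =
      replicate m 1 ++ replicate (z + 1) 0 := by
  induction m with
  | zero => cases z <;> simp [replicate_succ]
  | succ m ih => simp [replicate_succ, ih]

theorem eq_ones_append_zeros {l : List ℕ} (hl : l.Pairwise (· ≥ ·))
    (hle : ∀ x ∈ l, x ≤ 1) : ∃ m z, l = replicate m 1 ++ replicate z 0 := by
  induction l with
  | nil => exact ⟨0, 0, rfl⟩
  | cons x l ih =>
    obtain ⟨hx, hl⟩ := pairwise_cons.1 hl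
    obtain ⟨m, z, rfl⟩ := ih hl fun y hy => hle y (mem_cons_of_mem x hy)
    rcases Nat.le_one_iff_eq_zero_or_eq_one.1 (hle x mem_cons_self) with rfl | rfl
    · have hm : m = 0 := by
        by_contra hm
        have := hx 1 (mem_append_left _ (mem_replicate.2 ⟨hm, rfl⟩))
        omega
      exact ⟨0, z + 1, by simp [hm, replicate_succ]⟩
    · exact ⟨m + 1, z, rfl⟩

/-- A sorted position with `x₃ ≤ 1`: the heaps `a ≥ b`, then `m` ones and `z` zeros. -/
structure LowPosition where
  a : ℕ
  b : ℕ
  m : ℕ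
  z : ℕ
  b_le_a : b ≤ a
  one_le_b : 1 ≤ m → 1 ≤ b

namespace LowPosition

variable {k : ℕ}

def toList (p : LowPosition) : List ℕ := p.a :: p.b :: (replicate p.m 1 ++ replicate p.z 0)

theorem headI_toList (p : LowPosition) : p.toList.headI = p.a := rfl

/-- For odd `m` this is `R(x₁ - x₂) = 0`; for even `m` it is the paper's `k`-nice condition. -/
def IsKernel (k : ℕ) (p : LowPosition) : Prop := R k p.a = (swap 0 1 ^ (p.m + 1)) (R k p.b)

theorem sum_toList (p : LowPosition) : p.toList.sum = p.a + p.b + p.m := by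
  simp [toList, sum_replicate]
  omega

theorem heap_toList_add_three (p : LowPosition) (j : ℕ) :
    heap p.toList (j + 3) = if j < p.m then 1 else 0 := by
  simp only [heap, toList, show j + 3 - 1 = j + 1 + 1 from rfl, getD_cons_succ]
  split_ifs with h
  · rw [getD_append _ _ _ _ (by simpa using h)]
    exact getD_replicate 1 h
  · rw [getD_append_right _ _ _ _ (by simpa using h)]
    simp [getD_eq_getElem?_getD]

theorem beta_toList (p : LowPosition) (hm : 1 ≤ p.m) : beta p.toList = p.m := by
  have h3 : heap p.toList 3 = 1 := (heap_toList_add_three p 0).trans (if_pos hm)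
  have hmax :
      IsGreatest {j | 1 ≤ j ∧ j ≤ p.toList.length ∧ heap p.toList j = 1} (p.m + 2) := by
    refine ⟨⟨by omega, by simp [toList], ?_⟩, fun j ⟨_, _, hj⟩ => ?_⟩
    · simpa [show p.m + 2 = p.m - 1 + 3 by omega, show p.m - 1 < p.m by omega]
        using heap_toList_add_three p (p.m - 1)
    · by_contra hjm
      have := heap_toList_add_three p (j - 3)
      rw [show j - 3 + 3 = j by omega, hj, if_neg (by omega)] at this
      exact one_ne_zero this
  rw [beta, if_neg (by omega), h3, hmax.csSup_eq, Nat.add_sub_cancel]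

theorem exists_toList_eq {S : List ℕ} (hS : S.Pairwise (· ≥ ·)) (h3 : heap S 3 = 1) :
    ∃ p : LowPosition, p.toList = S ∧ 1 ≤ p.m := by
  rcases S with _ | ⟨a, _ | ⟨b, _ | ⟨c, l⟩⟩⟩ <;> simp only [heap, getD_cons_succ,
    getD_cons_zero, getD_nil, Nat.add_one_sub_one, Nat.zero_ne_one] at h3
  subst h3
  obtain ⟨ha, hb, hl⟩ : (∀ x ∈ b :: 1 :: l, a ≥ x) ∧ (∀ x ∈ 1 :: l, b ≥ x) ∧
      (1 :: l).Pairwise (· ≥ ·) := by simpa only [pairwise_cons] using hS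
  obtain ⟨m, z, hmz⟩ := eq_ones_append_zeros hl
    fun x hx => (mem_cons.1 hx).elim le_of_eq fun hx => (pairwise_cons.1 hl).1 x hx
  have hm : 1 ≤ m := by
    rcases m with _ | m
    · cases z <;> simp [replicate_succ] at hmz
    · omega
  exact ⟨⟨a, b, m, z, ha b mem_cons_self, fun _ => hb 1 mem_cons_self⟩,
    by simp [toList, hmz], hm⟩

theorem exists_toList_eq_orderedInsert (hk : 1 ≤ k) (p : LowPosition) (v : ℕ) :
    ∃ q : LowPosition, q.toList = p.toList.tail.orderedInsert (· ≥ ·) v ∧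
      (q.IsKernel k ↔ R k v = (swap 0 1 ^ (p.m + 1)) (R k p.b)) := by
  obtain ⟨a, b, m, z, hba, hmb⟩ := p
  rcases le_or_gt b v with hbv | hvb
  · exact ⟨⟨v, b, m, z, hbv, hmb⟩, by simp [toList, hbv], Iff.rfl⟩
  rcases Nat.eq_zero_or_pos v with rfl | hv
  · have hins : (toList ⟨a, b, m, z, hba, hmb⟩).tail.orderedInsert (· ≥ ·) 0 =
        b :: (replicate m 1 ++ replicate (z + 1) 0) := by
      rw [toList, tail_cons, orderedInsert_cons, if_neg (not_le.2 hvb),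
        orderedInsert_zero_ones_zeros]
    rw [hins]
    rcases m with _ | m
    · exact ⟨⟨b, 0, 0, z, b.zero_le, by omega⟩, by simp [toList, replicate_succ],
        eq_comm.trans (swap_pow_involutive 0 1 _).eq_iff⟩
    · refine ⟨⟨b, 1, m, z + 1, hmb (by omega), fun _ => le_rfl⟩,
        by simp [toList, replicate_succ], ?_⟩
      have h0 : R k 0 = 0 := Nat.zero_mod _
      have h1 : R k 1 = 1 := Nat.mod_eq_of_lt (by omega)
      change R k b = (swap 0 1 ^ (m + 1)) (R k 1) ↔ R k 0 = (swap 0 1 ^ (m + 1 + 1)) (R k b)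
      rw [h0, h1, eq_comm (a := 0), (swap_pow_involutive 0 1 _).eq_iff, pow_succ _ (m + 1),
        Perm.mul_apply, swap_apply_left]
  · refine ⟨⟨b, v, m, z, hvb.le, fun _ => hv⟩, ?_,
      eq_comm.trans (swap_pow_involutive 0 1 _).eq_iff⟩
    simp [toList, not_le.2 hvb, orderedInsert_ones_zeros_of_pos hv]

theorem sum_toList_ne_zero_of_isKernel {p : LowPosition} (hp : p.IsKernel k) :
    p.toList.sum ≠ 0 := by
  intro h
  rw [sum_toList] at h
  simp [IsKernel, R, show p.a = 0 by omega, show p.b = 0 by omega, show p.m = 0 by omega] at hp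

theorem exists_not_isKernel_of_bFollower (hk : 1 ≤ k) {p : LowPosition} (hp : p.IsKernel k)
    {S : List ℕ} (hS : BFollower k p.toList S) :
    ∃ q : LowPosition, q.toList = S ∧ ¬ q.IsKernel k := by
  obtain ⟨t, ht1, htk, rfl⟩ := hS
  rw [headI_toList] at htk ⊢
  obtain ⟨q, hq, hker⟩ := exists_toList_eq_orderedInsert hk p (p.a - t)
  refine ⟨q, hq, fun hq' => R_ne_of_lt_of_le_add (k := k) (x := p.a) (y := p.a - t)
    (by omega) (by omega) ?_⟩
  rw [hp, hker.1 hq']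

theorem exists_isKernel_bFollower (hk : 1 ≤ k) {p : LowPosition} (hsum : p.toList.sum ≠ 0)
    (hp : ¬ p.IsKernel k) :
    ∃ q : LowPosition, q.IsKernel k ∧ BFollower k p.toList q.toList := by
  have hRb : R k p.b ≤ p.b := Nat.mod_le _ _
  have hRb' : R k p.b < k + 1 := Nat.mod_lt _ (by omega)
  have hr := swap_pow_apply_le (p.m + 1) (R k p.b)
  have hba := p.b_le_a
  have ha : 1 ≤ p.a := by
    have := p.one_le_b
    rw [sum_toList] at hsum
    omega
  obtain ⟨t, ht1, htk, ht⟩ := exists_R_sub_eq (by omega) (by omega) hp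
  obtain ⟨q, hq, hker⟩ := exists_toList_eq_orderedInsert hk p (p.a - t)
  exact ⟨q, hker.2 ht, t, ht1, htk, hq⟩

theorem misereBP_toList_iff (hk : 1 ≤ k) (p : LowPosition) :
    MisereBP k p.toList ↔ p.IsKernel k :=
  misereBP_iff_of_kernel toList (IsKernel k) (fun _ => sum_toList_ne_zero_of_isKernel)
    (fun _ _ hp hS => exists_not_isKernel_of_bFollower hk hp hS)
    (fun _ => exists_isKernel_bFollower hk) p

end LowPosition

theorem stmt13_general (k : ℕ) (hk : 2 ≤ k) (S : List ℕ) (hsorted : S.Pairwise (· ≥ ·))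
    (h3 : heap S 3 ≤ 1) (hb : Odd (beta S)) (hP : MisereBP k S) :
    R k (heap S 1 - heap S 2) = 0 := by
  have h3' : heap S 3 = 1 := by
    by_contra h
    rw [beta, if_pos (by omega)] at hb
    exact Nat.not_odd_zero hb
  obtain ⟨p, rfl, hm⟩ := LowPosition.exists_toList_eq hsorted h3'
  rw [LowPosition.beta_toList p hm] at hb
  have hker := (LowPosition.misereBP_toList_iff (by omega) p).1 hP
  rw [LowPosition.IsKernel, swap_pow_of_even 0 1 hb.add_one, Perm.one_apply] at hker
  exact Nat.sub_mod_eq_zero_of_mod_eq hker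

theorem stmt13 (k : ℕ) (hk : 2 ≤ k) (S : List ℕ) (hn : 4 ≤ S.length) (hsorted : S.Pairwise (· ≥ ·))
    (h3 : heap S 3 ≤ 1) (hb : Odd (beta S)) (hP : MisereBP k S) :
    R k (heap S 1 - heap S 2) = 0 :=
  stmt13_general k hk S hsorted h3 hb hP
end

section
/- Let k ≥ 2. If a position S = (x_1, ..., x_n) satisfies x_3 ≤ 1, β(S) is even, and (x_1, x_2) is k-nice, then S is a P-position in misère k-Bounded Greedy Nim. -/
/-!
Write a sorted position with `x₃ ≤ 1` as `(a, b, 1, …, 1, 0, …, 0)` with `e` ones after the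
first two heaps (so `e = β(S)`), and let `τₑ` swap the residues `0` and `1` when `e` is even and
be the identity when `e` is odd. For `k ≥ 1` the misère P-positions among these are exactly those
with `R a = τₑ (R b)`; for even `e` this is `k`-niceness of `(a, b)`.

A move lowers the top heap to `y = a - t` with `1 ≤ t ≤ k`. While `y > 0` (or `y ≥ b`) the new
position is `(y, b, e)` or `(b, y, e)`, and since `τₑ` is an involution both satisfy the
condition iff `R y = τₑ (R b)`: from a P-position no move keeps it, as `R y ≠ R a`, and from
any other position with `a > 0` some `t` hits the required residue. The remaining moves empty a
heap of at most `k` stones and are checked directly.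
-/

namespace BoundedGreedyNim
open List

variable {k a b c e r t y : ℕ} {S U : List ℕ}

theorem misereBP_iff_of_kernel (C P : List ℕ → Prop)
    (hC : ∀ S S', C S → BFollower k S S' → C S')
    (hP_sum : ∀ S, C S → P S → S.sum ≠ 0)
    (hP_move : ∀ S S', C S → P S → BFollower k S S' → ¬ P S')
    (hN_move : ∀ S, C S → ¬ P S → S.sum ≠ 0 → ∃ S', BFollower k S S' ∧ P S') :
    ∀ S, C S → (MisereBP k S ↔ P S) := by
  intro S
  induction hs : S.sum using Nat.strong_induction_on generalizing S with
  | _ n ih =>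
    intro hS
    have ih' : ∀ S', BFollower k S S' → (MisereBP k S' ↔ P S') := fun S' hS' =>
      ih _ (hs ▸ hS'.sum_lt) S' rfl (hC S S' hS hS')
    rw [MisereBP]
    constructor
    · rintro ⟨hsum, hN⟩
      by_contra hnP
      obtain ⟨S', hS', hP'⟩ := hN_move S hS hnP (hs ▸ hsum)
      exact hN S' hS' ((ih' S' hS').2 hP')
    · intro hP
      exact ⟨hs ▸ hP_sum S hS hP, fun S' hS' hM => hP_move S S' hS hP hS' ((ih' S' hS').1 hM)⟩

lemma R_of_le (h : a ≤ k) : R k a = a := Nat.mod_eq_of_lt (Nat.lt_succ_of_le h)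

lemma R_le : R k a ≤ k := Nat.lt_succ_iff.1 (Nat.mod_lt _ k.succ_pos)

lemma R_add_mul_of_le (h : c ≤ k) (q : ℕ) : R k (c + (k + 1) * q) = c := by
  rw [R, Nat.add_mul_mod_self_left]; exact R_of_le h

lemma R_sub_ne (ht : 0 < t) (htk : t ≤ k) (hta : t ≤ a) : R k (a - t) ≠ R k a := by
  intro h
  have h0 := Nat.sub_mod_eq_zero_of_mod_eq h.symm
  rw [Nat.sub_sub_self hta, ← R, R_of_le htk] at h0
  omega

lemma exists_R_sub_eq (hck : c ≤ k) (hca : c ≠ R k a) (ha : c < R k a ∨ k < a) :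
    ∃ t, 0 < t ∧ t ≤ min a k ∧ R k (a - t) = c := by
  have hdiv := Nat.mod_add_div a (k + 1)
  have hRa : R k a ≤ k := R_le
  rw [← R] at hdiv
  rcases Nat.lt_or_gt_of_ne hca with hlt | hgt
  · refine ⟨R k a - c, by omega, by omega, ?_⟩
    rw [show a - (R k a - c) = c + (k + 1) * (a / (k + 1)) by omega, R_add_mul_of_le hck]
  · obtain ⟨q, hq⟩ : ∃ q, a / (k + 1) = q + 1 :=
      Nat.exists_eq_succ_of_ne_zero (by rintro h0; rw [h0] at hdiv; omega)
    rw [hq, mul_add] at hdiv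
    refine ⟨R k a + (k + 1) - c, by omega, by omega, ?_⟩
    rw [show a - (R k a + (k + 1) - c) = c + (k + 1) * q by omega, R_add_mul_of_le hck]

def twist (e : ℕ) : Equiv.Perm ℕ := if Even e then Equiv.swap 0 1 else 1

lemma twist_of_even (he : Even e) : twist e = Equiv.swap 0 1 := if_pos he

lemma twist_of_not_even (he : ¬ Even e) : twist e = 1 := if_neg he

lemma twist_twist (e r : ℕ) : twist e (twist e r) = r := by
  unfold twist; split_ifs <;> simp

lemma twist_le_max (e r : ℕ) : twist e r ≤ max r 1 := by
  unfold twist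
  split_ifs
  · rcases Nat.lt_trichotomy r 1 with h | rfl | h
    · obtain rfl : r = 0 := by omega
      simp
    · simp
    · rw [Equiv.swap_apply_of_ne_of_ne (by omega) (by omega)]; exact le_max_left r 1
  · exact le_max_left r 1

lemma twist_eq_zero (hr : 0 < r) : twist e r = 0 ↔ Even e ∧ r = 1 := by
  by_cases he : Even e
  · simp [twist_of_even he, he, Equiv.swap_apply_eq_iff]
  · simp [twist_of_not_even he, he, hr.ne']

/-- For a sorted position `(a, b, 1, …, 1, 0, …, 0)` this is the triple `(a, b, e)`, `e` being
the number of heaps of size one after the first two. -/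
def signature (S : List ℕ) : ℕ × ℕ × ℕ := (heap S 1, heap S 2, (S.drop 2).count 1)

def IsPTriple (k : ℕ) (p : ℕ × ℕ × ℕ) : Prop := R k p.1 = twist p.2.2 (R k p.2.1)

def lowerTop (b e y : ℕ) : ℕ × ℕ × ℕ :=
  if b ≤ y then (y, b, e)
  else if 0 < y then (b, y, e)
  else if 0 < e then (b, 1, e - 1)
  else (b, 0, 0)

lemma isPTriple_lowerTop (hy : b ≤ y ∨ 0 < y) :
    IsPTriple k (lowerTop b e y) ↔ R k y = twist e (R k b) := by
  unfold lowerTop IsPTriple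
  split_ifs
  · rfl
  · constructor <;> intro h <;> rw [h, twist_twist]
  all_goals omega

lemma isPTriple_lowerTop_zero (hk : 0 < k) (hb : 0 < b) (hbk : b ≤ k) :
    IsPTriple k (lowerTop b e 0) ↔ Even e ∧ b = 1 := by
  have h1 : R k 1 = 1 := R_of_le hk
  unfold lowerTop IsPTriple
  rw [if_neg (by omega), if_neg (lt_irrefl 0)]
  rcases e with _ | e
  · simp [R_of_le hbk, R_of_le (Nat.zero_le k), twist_of_even Even.zero]
  · by_cases he : Even e
    · simp [R_of_le hbk, h1, twist_of_even he, Nat.even_add_one, he, hb.ne']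
    · simp [R_of_le hbk, h1, twist_of_not_even he, Nat.even_add_one, he]

lemma not_isPTriple_lowerTop (hk : 0 < k) (hba : b ≤ a) (ht : 0 < t) (hta : t ≤ min a k)
    (hP : IsPTriple k (a, b, e)) : ¬ IsPTriple k (lowerTop b e (a - t)) := by
  have htk : t ≤ k := hta.trans (min_le_right a k)
  by_cases hy : b ≤ a - t ∨ 0 < a - t
  · rw [isPTriple_lowerTop hy]
    exact hP ▸ R_sub_ne ht htk (hta.trans (min_le_left a k))
  · rw [show a - t = 0 by omega, isPTriple_lowerTop_zero hk (by omega) (by omega)]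
    rintro ⟨he, rfl⟩
    have : R k a = 0 := by simpa [IsPTriple, twist_of_even he, R_of_le hk] using hP
    rw [R_of_le (by omega)] at this
    omega

lemma exists_isPTriple_lowerTop (hk : 0 < k) (hba : b ≤ a) (ha : 0 < a)
    (hP : ¬ IsPTriple k (a, b, e)) :
    ∃ t, 0 < t ∧ t ≤ min a k ∧ IsPTriple k (lowerTop b e (a - t)) := by
  replace hP : twist e (R k b) ≠ R k a := Ne.symm hP
  have hmax := twist_le_max e (R k b)
  have hRb : R k b ≤ k := R_le
  have hwrap : twist e (R k b) < R k a ∨ k < a := by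
    by_contra! h
    have hRa := R_of_le h.2
    have hRb' : R k b = b := R_of_le (by omega)
    omega
  obtain ⟨t, ht, hta, hRt⟩ := exists_R_sub_eq (by omega) hP hwrap
  refine ⟨t, ht, hta, ?_⟩
  by_cases hy : b ≤ a - t ∨ 0 < a - t
  · exact (isPTriple_lowerTop hy).2 hRt
  · have hb : 0 < b := by omega
    have hbk : b ≤ k := by omega
    rw [show a - t = 0 by omega] at hRt ⊢
    rw [isPTriple_lowerTop_zero hk hb hbk, ← twist_eq_zero hb, ← R_of_le hbk, ← hRt]
    exact R_of_le (Nat.zero_le k)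

lemma eq_replicate_of_le_one (hU : U.Pairwise (· ≥ ·)) (h1 : ∀ x ∈ U, x ≤ 1) :
    U = replicate (U.count 1) 1 ++ replicate (U.count 0) 0 := by
  induction U with
  | nil => rfl
  | cons x U ih =>
    rw [pairwise_cons] at hU
    have hx : x ≤ 1 := h1 x mem_cons_self
    have hU' := ih hU.2 fun u hu => h1 u (mem_cons_of_mem x hu)
    rcases Nat.le_one_iff_eq_zero_or_eq_one.1 hx with rfl | rfl
    · have : U.count 1 = 0 := count_eq_zero.2 fun h => by simpa using hU.1 1 h
      rw [this] at hU'
      conv_lhs => rw [hU']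
      simp [this, replicate_succ]
    · conv_lhs => rw [hU']
      simp [replicate_succ]

lemma orderedInsert_replicate_of_pos (hy : 0 < y) (e z : ℕ) :
    (replicate e 1 ++ replicate z 0).orderedInsert (· ≥ ·) y =
      y :: (replicate e 1 ++ replicate z 0) := by
  rcases e with _ | e
  · rcases z with _ | z <;> simp [replicate_succ]
  · simp [replicate_succ, hy.ne']

lemma orderedInsert_zero_replicate (e z : ℕ) :
    (replicate e 1 ++ replicate z 0).orderedInsert (· ≥ ·) 0 =
      replicate e 1 ++ replicate (z + 1) 0 := by
  induction e with
  | zero => rcases z with _ | z <;> simp [replicate_succ]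
  | succ e ih => simp [replicate_succ, ih]

lemma orderedInsert_cons_replicate (b e z y : ℕ) :
    (b :: (replicate e 1 ++ replicate z 0)).orderedInsert (· ≥ ·) y =
      if b ≤ y then y :: b :: (replicate e 1 ++ replicate z 0)
      else if 0 < y then b :: y :: (replicate e 1 ++ replicate z 0)
      else b :: (replicate e 1 ++ replicate (z + 1) 0) := by
  rw [orderedInsert_cons]
  split_ifs with hby hy
  · rfl
  · rw [orderedInsert_replicate_of_pos hy]
  · rw [Nat.eq_zero_of_not_pos hy, orderedInsert_zero_replicate]

def SmallTail (S : List ℕ) : Prop := S.Pairwise (· ≥ ·) ∧ ∀ x ∈ S.drop 2, x ≤ 1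

lemma SmallTail.exists_eq_replicate (hS : SmallTail (a :: b :: U)) :
    ∃ e z, U = replicate e 1 ++ replicate z 0 :=
  ⟨_, _, eq_replicate_of_le_one (hS.1.sublist (drop_sublist 2 (a :: b :: U))) hS.2⟩

lemma SmallTail.orderedInsert_tail (hS : SmallTail S) (y : ℕ) :
    SmallTail (S.tail.orderedInsert (· ≥ ·) y) := by
  refine ⟨hS.1.tail.orderedInsert y, ?_⟩
  match S, hS with
  | [], _ | [_], _ => simp
  | a :: b :: U, hS =>
    obtain ⟨e, z, rfl⟩ := hS.exists_eq_replicate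
    rw [tail_cons, orderedInsert_cons_replicate]
    split_ifs
    · simpa using hS.2
    · simpa using hS.2
    · intro x hx
      rw [drop_succ_cons] at hx
      have := mem_of_mem_drop hx
      simp only [mem_append, mem_replicate] at this
      omega

lemma signature_cons_cons (a b : ℕ) (L : List ℕ) :
    signature (a :: b :: L) = (a, b, L.count 1) :=
  rfl

lemma signature_orderedInsert_tail (hS : SmallTail S) (y : ℕ) :
    signature (S.tail.orderedInsert (· ≥ ·) y) =
      lowerTop (heap S 2) ((S.drop 2).count 1) y := by
  match S, hS with
  | [], _ | [_], _ => simp [signature, lowerTop, heap]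
  | a :: b :: U, hS =>
    obtain ⟨e, z, rfl⟩ := hS.exists_eq_replicate
    have hcount (e z : ℕ) : (replicate e 1 ++ replicate z 0).count 1 = e := by
      simp [count_replicate]
    rw [tail_cons, orderedInsert_cons_replicate, drop_succ_cons, drop_succ_cons, drop_zero, hcount,
      show heap (a :: b :: _) 2 = b from rfl]
    unfold lowerTop
    split_ifs with _ _ he0
    · rw [signature_cons_cons, hcount]
    · rw [signature_cons_cons, hcount]
    · obtain ⟨e, rfl⟩ := Nat.exists_eq_add_one_of_ne_zero he0.ne'
      rw [replicate_succ, cons_append, signature_cons_cons, hcount, Nat.add_sub_cancel]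
    · rw [Nat.eq_zero_of_not_pos he0, replicate_zero, nil_append, replicate_succ,
        signature_cons_cons]
      simp [count_replicate]

lemma getD_replicate_append (e z i : ℕ) :
    (replicate e 1 ++ replicate z 0).getD i 0 = if i < e then 1 else 0 := by
  simp only [getD_eq_getElem?_getD, getElem?_append, getElem?_replicate, length_replicate]
  split_ifs <;> simp

lemma heap_one_eq_headI (S : List ℕ) : heap S 1 = S.headI := by
  cases S <;> rfl

lemma heap_two_le_heap_one (hS : S.Pairwise (· ≥ ·)) : heap S 2 ≤ heap S 1 := by
  match S, hS with
  | [], _ | [_], _ => simp [heap]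
  | a :: b :: U, hS => exact (pairwise_cons.1 hS).1 b mem_cons_self

lemma headI_pos (hS : S.Pairwise (· ≥ ·)) (h : S.sum ≠ 0) : 0 < S.headI := by
  match S, hS with
  | [], _ => simp at h
  | a :: U, hS =>
    refine Nat.pos_of_ne_zero fun ha => h ?_
    subst ha
    simpa [sum_eq_zero_iff] using (pairwise_cons.1 hS).1

lemma not_isPTriple_of_sum_eq_zero (h : S.sum = 0) :
    ¬ IsPTriple k (signature S) := by
  rw [eq_replicate_iff.2 ⟨rfl, fun x hx => sum_eq_zero_iff.1 h x hx⟩]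
  simp [signature, heap, IsPTriple, count_replicate, twist_of_even Even.zero, R]

lemma smallTail_of_heap_three_le_one (hS : S.Pairwise (· ≥ ·)) (h3 : heap S 3 ≤ 1) :
    SmallTail S := by
  refine ⟨hS, ?_⟩
  match S, hS, h3 with
  | [], _, _ | [_], _, _ | [_, _], _, _ => simp
  | a :: b :: c :: U, hS, (h3 : c ≤ 1) =>
    intro x hx
    rcases mem_cons.1 hx with rfl | hx
    · exact h3
    · exact ((pairwise_cons.1 ((pairwise_cons.1 (pairwise_cons.1 hS).2).2)).1 x hx).trans h3

lemma beta_eq_count (hS : SmallTail S) : beta S = (S.drop 2).count 1 := by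
  match S, hS with
  | [], _ | [_], _ => simp [beta, heap]
  | a :: b :: U, hS =>
    obtain ⟨e, z, rfl⟩ := hS.exists_eq_replicate
    have hheap (j : ℕ) : heap (a :: b :: (replicate e 1 ++ replicate z 0)) (j + 3) =
        if j < e then 1 else 0 := getD_replicate_append e z j
    have hcount : ((a :: b :: (replicate e 1 ++ replicate z 0)).drop 2).count 1 = e := by
      simp [count_replicate]
    rw [hcount, beta]
    rcases e with _ | e
    · rw [hheap 0, if_neg (Nat.not_lt_zero 0), if_pos rfl]
    rw [hheap 0, if_pos e.succ_pos, if_neg one_ne_zero]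
    suffices IsGreatest {j | 1 ≤ j ∧
        j ≤ (a :: b :: (replicate (e + 1) 1 ++ replicate z 0)).length ∧
        heap (a :: b :: (replicate (e + 1) 1 ++ replicate z 0)) j = 1} (e + 3) by
      rw [this.csSup_eq]; omega
    refine ⟨⟨by omega, by simp, by simpa using hheap e⟩, fun j ⟨_, _, hj⟩ => ?_⟩
    by_contra! hlt
    obtain ⟨i, rfl⟩ := Nat.exists_eq_add_of_lt hlt
    rw [show e + 3 + i + 1 = (e + i + 1) + 3 by omega, hheap, if_neg (by omega)] at hj
    exact zero_ne_one hj

theorem misereBP_iff_isPTriple (hk : 0 < k) (hS : SmallTail S) :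
    MisereBP k S ↔ IsPTriple k (signature S) := by
  refine misereBP_iff_of_kernel SmallTail (fun S => IsPTriple k (signature S)) ?_ ?_ ?_ ?_ S hS
  · rintro S _ hS ⟨t, -, -, rfl⟩
    exact hS.orderedInsert_tail _
  · exact fun S _ hP hsum => not_isPTriple_of_sum_eq_zero hsum hP
  · rintro S _ hS hP ⟨t, ht, hta, rfl⟩
    rw [signature_orderedInsert_tail hS]
    rw [← heap_one_eq_headI] at hta ⊢
    exact not_isPTriple_lowerTop hk (heap_two_le_heap_one hS.1) ht hta hP
  · intro S hS hP hsum
    have ha : 0 < heap S 1 := heap_one_eq_headI S ▸ headI_pos hS.1 hsum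
    obtain ⟨t, ht, hta, hP'⟩ := exists_isPTriple_lowerTop hk (heap_two_le_heap_one hS.1) ha hP
    refine ⟨_, ⟨t, ht, heap_one_eq_headI S ▸ hta, rfl⟩, ?_⟩
    rwa [signature_orderedInsert_tail hS, ← heap_one_eq_headI]

end BoundedGreedyNim

lemma KNice.R_eq_swap {k a b : ℕ} (hba : b ≤ a) (h : KNice k a b) :
    R k a = Equiv.swap 0 1 (R k b) := by
  rcases h with ⟨ha, hb⟩ | ⟨hab, hb⟩ | ⟨ha, hb⟩
  · rw [ha, hb, Equiv.swap_apply_right]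
  · rw [Equiv.swap_apply_of_ne_of_ne (by omega) (by omega)]
    exact ((Nat.modEq_iff_dvd' hba).2 (Nat.dvd_of_mod_eq_zero hab)).symm
  · rw [ha, hb, Equiv.swap_apply_left]

theorem stmt16_general (k : ℕ) (hk : 2 ≤ k) (S : List ℕ) (hsorted : S.Pairwise (· ≥ ·))
    (h3 : heap S 3 ≤ 1) (hb : Even (beta S))
    (hnice : KNice k (heap S 1) (heap S 2)) :
    MisereBP k S := by
  have hS := BoundedGreedyNim.smallTail_of_heap_three_le_one hsorted h3
  refine (BoundedGreedyNim.misereBP_iff_isPTriple (by omega) hS).2 ?_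
  show R k (heap S 1) = BoundedGreedyNim.twist ((S.drop 2).count 1) (R k (heap S 2))
  rw [← BoundedGreedyNim.beta_eq_count hS, BoundedGreedyNim.twist_of_even hb]
  exact hnice.R_eq_swap (BoundedGreedyNim.heap_two_le_heap_one hsorted)

theorem stmt16 (k : ℕ) (hk : 2 ≤ k) (S : List ℕ) (hn : 4 ≤ S.length) (hsorted : S.Pairwise (· ≥ ·))
    (h3 : heap S 3 ≤ 1) (hb : Even (beta S))
    (hnice : KNice k (heap S 1) (heap S 2)) :
    MisereBP k S :=
  stmt16_general k hk S hsorted h3 hb hnice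
end
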